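/- arXiv:2205.11630 — 6 statements merged into one kernel-verified Lean document; each statement's English description precedes it below -/
import Mathlib

section
/- There exists k₀ such that for all k ≥ k₀ the following holds: for every A ⊆ L_k with t := |N(A)| − |A| ≥ |A|/(2k) and |A| = a, there exists R ⊆ A such that (i) |R| ≤ 18·a·(ln k)⁵/k³, (ii) |E(N(R), L_k ∖ A)| ≤ 18·t·(ln k)⁵/k, and (iii) |G^h ∖ N(N(N(R)) ∩ A)| ≤ 9·t/k^{1/5}, where E(N(R), L_k ∖ A) is the set of edges of M with one endpoint in N(R) and the other in L_k ∖ A. -/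
open MeasureTheory Finset Filter

/-- The Bernoulli(p) measure on `Bool`. -/
noncomputable def bern (p : ℝ) : Measure Bool :=
  ENNReal.ofReal p • Measure.dirac true + ENNReal.ofReal (1 - p) • Measure.dirac false

/-- Product measure: each coordinate is included independently with probability `p`. -/
noncomputable def pSpace (ι : Type*) [Fintype ι] (p : ℝ) : Measure (ι → Bool) :=
  Measure.pi fun _ => bern p

/-- The random subset determined by an outcome `ω`. -/
def sample {ι : Type*} [Fintype ι] (ω : ι → Bool) : Finset ι :=
  Finset.univ.filter (fun i => ω i = true)

/-- `L_k`: all `k`-element subsets of `[2k-1]`, one side of the middle-two-layers graph `M`. -/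
def Lk (k : ℕ) : Finset (Finset (Fin (2 * k - 1))) :=
  (Finset.univ : Finset (Fin (2 * k - 1))).powersetCard k

/-- `L_{k-1}`: all `(k-1)`-element subsets of `[2k-1]`, the other side of `M`. -/
def Lk1 (k : ℕ) : Finset (Finset (Fin (2 * k - 1))) :=
  (Finset.univ : Finset (Fin (2 * k - 1))).powersetCard (k - 1)

/-- The neighborhood in `M` of a set `A ⊆ L_k`: all `w ∈ L_{k-1}` contained in some `u ∈ A`. -/
def nbrLow (k : ℕ) (A : Finset (Finset (Fin (2 * k - 1)))) : Finset (Finset (Fin (2 * k - 1))) :=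
  (Lk1 k).filter (fun w => ∃ u ∈ A, w ⊆ u)

/-- The neighborhood in `M` of a set `A ⊆ L_{k-1}`: all `u ∈ L_k` containing some `w ∈ A`. -/
def nbrHigh (k : ℕ) (A : Finset (Finset (Fin (2 * k - 1)))) : Finset (Finset (Fin (2 * k - 1))) :=
  (Lk k).filter (fun u => ∃ w ∈ A, w ⊆ u)

/-- `A ⊆ L_k` is closed: no strictly larger `A' ⊆ L_k` has the same neighborhood. -/
def ClosedLow (k : ℕ) (A : Finset (Finset (Fin (2 * k - 1)))) : Prop :=
  ¬ ∃ A' : Finset (Finset (Fin (2 * k - 1))), A' ⊆ Lk k ∧ A ⊂ A' ∧ nbrLow k A' = nbrLow k A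

/-- `A ⊆ L_k` is 2-linked: no nonempty proper `B ⊊ A` with `N(B) ∩ N(A \ B) = ∅`. -/
def TwoLinkedLow (k : ℕ) (A : Finset (Finset (Fin (2 * k - 1)))) : Prop :=
  ¬ ∃ B : Finset (Finset (Fin (2 * k - 1))), B ⊂ A ∧ B.Nonempty ∧
      Disjoint (nbrLow k B) (nbrLow k (A \ B))

/-- `A ⊆ L_{k-1}` is closed: no strictly larger `A' ⊆ L_{k-1}` has the same neighborhood. -/
def ClosedHigh (k : ℕ) (A : Finset (Finset (Fin (2 * k - 1)))) : Prop :=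
  ¬ ∃ A' : Finset (Finset (Fin (2 * k - 1))), A' ⊆ Lk1 k ∧ A ⊂ A' ∧ nbrHigh k A' = nbrHigh k A

/-- `A ⊆ L_{k-1}` is 2-linked: no nonempty proper `B ⊊ A` with `N(B) ∩ N(A \ B) = ∅`. -/
def TwoLinkedHigh (k : ℕ) (A : Finset (Finset (Fin (2 * k - 1)))) : Prop :=
  ¬ ∃ B : Finset (Finset (Fin (2 * k - 1))), B ⊂ A ∧ B.Nonempty ∧
      Disjoint (nbrHigh k B) (nbrHigh k (A \ B))

/-- The number of walks `v, x, y, z` in `M` with `x, z ∈ A`: triples `(x, y, z)` with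
`y ∈ L_{k-1}`, `v ⊆ x`, `y ⊆ x`, `y ⊆ z`, and `x, z ∈ A`. -/
def walkCount (k : ℕ) (A : Finset (Finset (Fin (2 * k - 1))))
    (v : Finset (Fin (2 * k - 1))) : ℕ :=
  ((A ×ˢ (Lk1 k ×ˢ A)).filter (fun q => v ⊆ q.1 ∧ q.2.1 ⊆ q.1 ∧ q.2.1 ⊆ q.2.2)).card

/-- `G^h`: vertices `v ∈ L_{k-1}` with at least `k³/(2 ln⁴ k)` walks `v, x, y, z` with
`x, z ∈ A`. -/
noncomputable def Gh (k : ℕ) (A : Finset (Finset (Fin (2 * k - 1)))) :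
    Finset (Finset (Fin (2 * k - 1))) :=
  (Lk1 k).filter (fun v => (k : ℝ) ^ 3 / (2 * (Real.log k) ^ 4) ≤ (walkCount k A v : ℝ))

/-- The number of edges of `M` between `W ⊆ L_{k-1}` and `U ⊆ L_k`. -/
def edgesBetween (k : ℕ) (W U : Finset (Finset (Fin (2 * k - 1)))) : ℕ :=
  ((W ×ˢ U).filter (fun q => q.1 ⊆ q.2)).card

lemma st14_mem_Lk {k : ℕ} {x : Finset (Fin (2*k-1))} : x ∈ Lk k ↔ x.card = k :=
  Finset.mem_powersetCard_univ

lemma st14_mem_Lk1 {k : ℕ} {x : Finset (Fin (2*k-1))} : x ∈ Lk1 k ↔ x.card = k - 1 :=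
  Finset.mem_powersetCard_univ

lemma st14_card_supersets {k : ℕ} (hk : 1 ≤ k) {w : Finset (Fin (2*k-1))}
    (hw : w.card = k - 1) :
    ((Lk k).filter (fun x => w ⊆ x)).card = k := by
  have himg : (Lk k).filter (fun x => w ⊆ x)
      = (Finset.univ \ w).image (fun e => insert e w) := by
    ext x
    simp only [Finset.mem_filter, Finset.mem_image, Finset.mem_sdiff, Finset.mem_univ,
      true_and, st14_mem_Lk]
    constructor
    · rintro ⟨hxk, hwx⟩
      have h1 : (x \ w).card = 1 := by
        rw [Finset.card_sdiff_of_subset hwx, hxk, hw]; omega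
      obtain ⟨e, he⟩ := Finset.card_eq_one.mp h1
      have hex : e ∈ x \ w := he ▸ Finset.mem_singleton_self e
      have hew : e ∉ w := (Finset.mem_sdiff.mp hex).2
      refine ⟨e, hew, ?_⟩
      have hsub : insert e w ⊆ x :=
        Finset.insert_subset (Finset.mem_sdiff.mp hex).1 hwx
      have hcard : x.card ≤ (insert e w).card := by
        rw [Finset.card_insert_of_notMem hew, hw, hxk]; omega
      exact Finset.eq_of_subset_of_card_le hsub hcard
    · rintro ⟨e, hew, rfl⟩
      refine ⟨?_, Finset.subset_insert _ _⟩
      rw [Finset.card_insert_of_notMem hew, hw]; omega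
  rw [himg, Finset.card_image_of_injOn, Finset.card_sdiff_of_subset (Finset.subset_univ w),
    Finset.card_univ, Fintype.card_fin, hw]
  · omega
  · intro e he e' he' hee
    simp only [Finset.coe_sdiff, Set.mem_diff, Finset.mem_coe, Finset.coe_univ,
      Set.mem_univ, true_and] at he he'
    have hee' : insert e w = insert e' w := hee
    have : e ∈ insert e' w := by rw [← hee']; exact Finset.mem_insert_self e w
    rcases Finset.mem_insert.mp this with h | h
    · exact h
    · exact absurd h he

lemma st14_card_subsets {k : ℕ} (hk : 1 ≤ k) {x : Finset (Fin (2*k-1))}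
    (hx : x ∈ Lk k) :
    ((Lk1 k).filter (fun w => w ⊆ x)).card = k := by
  have hset : (Lk1 k).filter (fun w => w ⊆ x) = x.powersetCard (k-1) := by
    ext w
    simp only [Finset.mem_filter, st14_mem_Lk1, Finset.mem_powersetCard]
    tauto
  rw [hset, Finset.card_powersetCard, st14_mem_Lk.mp hx,
    Nat.choose_symm (n := k) (k := 1) hk, Nat.choose_one_right]

lemma st14_card_filter_product {α β : Type*} [DecidableEq α] (s : Finset α) (t : Finset β)
    (P : α → β → Prop) [∀ a b, Decidable (P a b)] :
    ((s ×ˢ t).filter (fun q => P q.1 q.2)).card = ∑ a ∈ s, (t.filter (P a)).card := by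
  rw [Finset.card_filter, Finset.sum_product]
  exact Finset.sum_congr rfl fun a _ => (Finset.card_filter _ _).symm

lemma st14_sum_pow {γ : Type*} [DecidableEq γ] (S : Finset γ) (p q : ℝ) :
    ∑ R ∈ S.powerset, p ^ R.card * q ^ (S.card - R.card) = (p + q) ^ S.card := by
  have h := Finset.prod_add (fun _ : γ => p) (fun _ : γ => q) S
  simp only [Finset.prod_const] at h
  rw [h]
  exact Finset.sum_congr rfl fun t ht => by
    rw [Finset.card_sdiff_of_subset (Finset.mem_powerset.mp ht)]

lemma st14_sum_miss {γ : Type*} [DecidableEq γ] (S T : Finset γ) (hT : T ⊆ S) (p q : ℝ) :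
    ∑ R ∈ S.powerset.filter (fun R => Disjoint R T), p ^ R.card * q ^ (S.card - R.card)
      = q ^ T.card * (p + q) ^ (S.card - T.card) := by
  have hset : S.powerset.filter (fun R => Disjoint R T) = (S \ T).powerset := by
    ext R
    simp only [Finset.mem_filter, Finset.mem_powerset, Finset.subset_sdiff]
  have hc : (S \ T).card = S.card - T.card := Finset.card_sdiff_of_subset hT
  rw [hset]
  have h2 : ∀ R ∈ (S \ T).powerset,
      p ^ R.card * q ^ (S.card - R.card)
        = q ^ T.card * (p ^ R.card * q ^ ((S \ T).card - R.card)) := by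
    intro R hR
    have hRs : R.card ≤ (S \ T).card := Finset.card_le_card (Finset.mem_powerset.mp hR)
    have hTS : T.card ≤ S.card := Finset.card_le_card hT
    have : S.card - R.card = T.card + ((S \ T).card - R.card) := by omega
    rw [this, pow_add]; ring
  rw [Finset.sum_congr rfl h2, ← Finset.mul_sum, st14_sum_pow, hc]

lemma st14_sum_w_disj {γ : Type*} [DecidableEq γ] (S T : Finset γ) (hT : T ⊆ S) (p : ℝ) :
    ∑ R ∈ S.powerset, (p ^ R.card * (1-p) ^ (S.card - R.card))
        * (if Disjoint R T then (1:ℝ) else 0) = (1-p) ^ T.card := by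
  simp only [mul_ite, mul_one, mul_zero]
  rw [← Finset.sum_filter, st14_sum_miss S T hT]
  have : p + (1 - p) = 1 := by ring
  rw [this, one_pow, mul_one]

lemma st14_sum_w_one {γ : Type*} [DecidableEq γ] (S : Finset γ) (p : ℝ) :
    ∑ R ∈ S.powerset, p ^ R.card * (1-p) ^ (S.card - R.card) = 1 := by
  rw [st14_sum_pow]
  have : p + (1 - p) = 1 := by ring
  rw [this, one_pow]

lemma st14_sum_w_hit {γ : Type*} [DecidableEq γ] (S T : Finset γ) (hT : T ⊆ S) (p : ℝ) :
    ∑ R ∈ S.powerset, (p ^ R.card * (1-p) ^ (S.card - R.card))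
        * (if ¬ Disjoint R T then (1:ℝ) else 0) = 1 - (1-p) ^ T.card := by
  have h1 := st14_sum_w_disj S T hT p
  have h2 := st14_sum_w_one S p
  have h3 : ∀ R : Finset γ, (p ^ R.card * (1-p) ^ (S.card - R.card))
      * (if ¬ Disjoint R T then (1:ℝ) else 0)
      = p ^ R.card * (1-p) ^ (S.card - R.card)
        - (p ^ R.card * (1-p) ^ (S.card - R.card)) * (if Disjoint R T then (1:ℝ) else 0) := by
    intro R; by_cases h : Disjoint R T <;> simp [h]
  rw [Finset.sum_congr rfl fun R _ => h3 R, Finset.sum_sub_distrib, h1, h2]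

lemma st14_bernoulli (p : ℝ) (hp : p ≤ 2) (n : ℕ) : 1 - (1-p) ^ n ≤ n * p := by
  have h := one_add_mul_le_pow (a := -p) (by linarith) n
  have : (1:ℝ) + n * (-p) = 1 - n * p := by ring
  rw [this] at h
  have : (1:ℝ) + -p = 1 - p := by ring
  rw [this] at h
  linarith

lemma st14_pow_le_exp (p : ℝ) (hp0 : 0 ≤ p) (hp1 : p ≤ 1) (n : ℕ) :
    (1-p) ^ n ≤ Real.exp (-(p * n)) := by
  have h1 : (1 - p : ℝ) ≤ Real.exp (-p) := by
    have := Real.add_one_le_exp (-p); linarith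
  calc (1-p)^n ≤ (Real.exp (-p))^n := by
        apply pow_le_pow_left₀ (by linarith) h1 n
    _ = Real.exp (-(p * n)) := by
        rw [← Real.exp_nat_mul]; ring_nf

lemma st14_forced {ι : Type*} [DecidableEq ι] {k : ℕ} {y v x : Finset ι}
    (hy : y.card = k - 1) (hv : v.card = k - 1) (hne : y ≠ v)
    (hyx : y ⊆ x) (hvx : v ⊆ x) (hx : x.card = k) (hk : 2 ≤ k) : x = y ∪ v := by
  have hsub : y ∪ v ⊆ x := Finset.union_subset hyx hvx
  have hint : (y ∩ v).card ≤ k - 2 := by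
    by_contra h
    push_neg at h
    have h1 : (y ∩ v).card ≤ y.card := Finset.card_le_card (Finset.inter_subset_left)
    have h2 : y ∩ v = y := Finset.eq_of_subset_of_card_le Finset.inter_subset_left (by omega)
    have h3 : y ⊆ v := by rw [← h2]; exact Finset.inter_subset_right
    exact hne (Finset.eq_of_subset_of_card_le h3 (by omega))
  have hcup : k ≤ (y ∪ v).card := by
    have := Finset.card_union_add_card_inter y v
    have hle : (y ∪ v).card ≤ x.card := Finset.card_le_card hsub
    omega
  exact (Finset.eq_of_subset_of_card_le hsub (by rw [hx]; exact hcup)).symm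

/-- The set of `z`-endpoints of walks from `v`. -/
def st14_Z (k : ℕ) (A : Finset (Finset (Fin (2 * k - 1)))) (v : Finset (Fin (2 * k - 1))) :
    Finset (Finset (Fin (2 * k - 1))) :=
  A.filter (fun z => ∃ x ∈ A, v ⊆ x ∧ ∃ y ∈ Lk1 k, y ⊆ x ∧ y ⊆ z)

lemma st14_d_le {k : ℕ} (hk : 1 ≤ k) {A : Finset (Finset (Fin (2 * k - 1)))}
    (hA : A ⊆ Lk k) {w : Finset (Fin (2 * k - 1))} (hw : w ∈ Lk1 k) :
    (A.filter (fun x => w ⊆ x)).card ≤ k := by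
  calc (A.filter (fun x => w ⊆ x)).card
      ≤ ((Lk k).filter (fun x => w ⊆ x)).card :=
        Finset.card_le_card (Finset.filter_subset_filter _ hA)
    _ = k := st14_card_supersets hk (st14_mem_Lk1.mp hw)

lemma st14_deg_split {k : ℕ} {A : Finset (Finset (Fin (2 * k - 1)))} (hA : A ⊆ Lk k)
    (P : Finset (Fin (2 * k - 1)) → Prop) [DecidablePred P] :
    (A.filter P).card + ((Lk k \ A).filter P).card = ((Lk k).filter P).card := by
  rw [← Finset.card_union_of_disjoint, ← Finset.filter_union,
    Finset.union_sdiff_of_subset hA]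
  exact Finset.disjoint_filter_filter Finset.disjoint_sdiff

lemma st14_cover {k : ℕ} {A : Finset (Finset (Fin (2 * k - 1)))} (hA : A ⊆ Lk k)
    {v : Finset (Fin (2 * k - 1))} (hv : v ∈ Lk1 k)
    {R : Finset (Finset (Fin (2 * k - 1)))} (hR : R ⊆ A)
    (h : ¬ Disjoint R (st14_Z k A v)) :
    v ∈ nbrLow k (nbrHigh k (nbrLow k R) ∩ A) := by
  obtain ⟨z, hzR, hzZ⟩ := Finset.not_disjoint_iff.mp h
  rw [st14_Z, Finset.mem_filter] at hzZ
  obtain ⟨hzA, x, hxA, hvx, y, hy, hyx, hyz⟩ := hzZ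
  have hynbr : y ∈ nbrLow k R := by
    rw [nbrLow, Finset.mem_filter]
    exact ⟨hy, z, hzR, hyz⟩
  have hxnbr : x ∈ nbrHigh k (nbrLow k R) := by
    rw [nbrHigh, Finset.mem_filter]
    exact ⟨hA hxA, y, hynbr, hyx⟩
  rw [nbrLow, Finset.mem_filter]
  exact ⟨hv, x, Finset.mem_inter.mpr ⟨hxnbr, hxA⟩, hvx⟩

lemma st14_walk_le {k : ℕ} (hk : 3 ≤ k) {A : Finset (Finset (Fin (2 * k - 1)))}
    (hA : A ⊆ Lk k) {v : Finset (Fin (2 * k - 1))} (hv : v ∈ Lk1 k) :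
    walkCount k A v ≤ 2 * k * k + 2 * (st14_Z k A v).card := by
  classical
  set T := ((A ×ˢ (Lk1 k ×ˢ A)).filter
    (fun q => v ⊆ q.1 ∧ q.2.1 ⊆ q.1 ∧ q.2.1 ⊆ q.2.2)) with hTdef
  have hmem : ∀ q ∈ T, (q.1 ∈ A ∧ q.2.1 ∈ Lk1 k ∧ q.2.2 ∈ A)
      ∧ v ⊆ q.1 ∧ q.2.1 ⊆ q.1 ∧ q.2.1 ⊆ q.2.2 := by
    intro q hq
    have h := Finset.mem_filter.mp hq
    have h1 := Finset.mem_product.mp h.1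
    have h2 := Finset.mem_product.mp h1.2
    exact ⟨⟨h1.1, h2.1, h2.2⟩, h.2⟩
  have hfib : ∀ q ∈ T, q.2.2 ∈ st14_Z k A v := by
    intro q hq
    obtain ⟨⟨hq1, hq21, hq22⟩, hvq, hyq, hyz⟩ := hmem q hq
    rw [st14_Z, Finset.mem_filter]
    exact ⟨hq22, q.1, hq1, hvq, q.2.1, hq21, hyq, hyz⟩
  have hwc : walkCount k A v = T.card := rfl
  rw [hwc, Finset.card_eq_sum_card_fiberwise hfib]
  -- bound each fiber
  have hfiba : ∀ z ∈ st14_Z k A v,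
      (T.filter (fun q => q.2.2 = z)).card ≤ 2 * k := by
    intro z hz
    have hzA : z ∈ A := Finset.mem_filter.mp hz |>.1
    set F := T.filter (fun q => q.2.2 = z) with hF
    have hsplit := Finset.card_filter_add_card_filter_not
      (s := F) (p := fun q => q.2.1 = v)
    have c1 : (F.filter (fun q => q.2.1 = v)).card ≤ k := by
      have hcs := st14_card_supersets (k := k) (by omega) (st14_mem_Lk1.mp hv)
      refine le_trans (Finset.card_le_card_of_injOn (fun q => q.1) ?_ ?_) hcs.le
      · intro q hq
        have hq' := Finset.mem_filter.mp hq
        have hqT := Finset.mem_filter.mp hq'.1 |>.1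
        obtain ⟨⟨hq1, _, _⟩, hvq, _, _⟩ := hmem q hqT
        exact Finset.mem_filter.mpr ⟨hA hq1, hvq⟩
      · intro q hq q' hq' heq
        simp only [Finset.coe_filter, Set.mem_setOf_eq] at hq hq'
        have hz1 : q.2.2 = z := (Finset.mem_filter.mp hq.1).2
        have hz2 : q'.2.2 = z := (Finset.mem_filter.mp hq'.1).2
        have : q.2 = q'.2 := by
          apply Prod.ext
          · rw [hq.2, hq'.2]
          · rw [hz1, hz2]
        exact Prod.ext heq this
    have c2 : (F.filter (fun q => ¬ q.2.1 = v)).card ≤ k := by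
      have hzLk : z ∈ Lk k := hA hzA
      have hcs := st14_card_subsets (k := k) (by omega) hzLk
      refine le_trans (Finset.card_le_card_of_injOn (fun q => q.2.1) ?_ ?_) hcs.le
      · intro q hq
        have hq' := Finset.mem_filter.mp hq
        have hqF := Finset.mem_filter.mp hq'.1
        obtain ⟨⟨_, hq21, _⟩, _, _, hyz⟩ := hmem q hqF.1
        refine Finset.mem_filter.mpr ⟨hq21, ?_⟩
        rw [← hqF.2]; exact hyz
      · intro q hq q' hq' heq
        have heq' : q.2.1 = q'.2.1 := heq
        simp only [Finset.coe_filter, Set.mem_setOf_eq] at hq hq'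
        have hqF := Finset.mem_filter.mp hq.1
        have hqF' := Finset.mem_filter.mp hq'.1
        obtain ⟨⟨hx1, hy1, _⟩, hv1, hyx1, _⟩ := hmem q hqF.1
        obtain ⟨⟨hx1', hy1', _⟩, hv1', hyx1', _⟩ := hmem q' hqF'.1
        have hxeq : q.1 = q.2.1 ∪ v :=
          st14_forced (st14_mem_Lk1.mp hy1) (st14_mem_Lk1.mp hv) hq.2 hyx1 hv1
            (st14_mem_Lk.mp (hA hx1)) (by omega)
        have hxeq' : q'.1 = q'.2.1 ∪ v :=
          st14_forced (st14_mem_Lk1.mp hy1') (st14_mem_Lk1.mp hv) hq'.2 hyx1' hv1'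
            (st14_mem_Lk.mp (hA hx1')) (by omega)
        apply Prod.ext
        · rw [hxeq, hxeq', heq']
        · exact Prod.ext heq' (by rw [hqF.2, hqF'.2])
    omega
  have hfibb : ∀ z ∈ st14_Z k A v, ¬ v ⊆ z →
      (T.filter (fun q => q.2.2 = z)).card ≤ 2 := by
    intro z hz hvz
    set F := T.filter (fun q => q.2.2 = z) with hF
    rcases F.eq_empty_or_nonempty with he | hne
    · rw [he]; simp
    have hzA : z ∈ A := Finset.mem_filter.mp hz |>.1
    have hzcard : z.card = k := st14_mem_Lk.mp (hA hzA)
    have hvcard : v.card = k - 1 := st14_mem_Lk1.mp hv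
    -- facts about any member of the fiber
    have key : ∀ q ∈ F, q.2.1 ≠ v ∧ (q.2.1 ∩ v).card = k - 2 ∧ q.2.1 ⊆ z
        ∧ q.1 = q.2.1 ∪ v := by
      intro q hq
      have hqF := Finset.mem_filter.mp hq
      obtain ⟨⟨hx1, hy1, _⟩, hv1, hyx1, hyz1⟩ := hmem q hqF.1
      have hyzz : q.2.1 ⊆ z := by rw [← hqF.2]; exact hyz1
      have hyne : q.2.1 ≠ v := by
        intro heq; apply hvz; rw [← heq]; exact hyzz
      have hycard : q.2.1.card = k - 1 := st14_mem_Lk1.mp hy1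
      have hxcard : q.1.card = k := st14_mem_Lk.mp (hA hx1)
      have hxeq : q.1 = q.2.1 ∪ v :=
        st14_forced hycard hvcard hyne hyx1 hv1 hxcard (by omega)
      have hintle : (q.2.1 ∩ v).card ≤ k - 2 := by
        by_contra hcon
        push_neg at hcon
        have h1 : (q.2.1 ∩ v).card ≤ q.2.1.card :=
          Finset.card_le_card Finset.inter_subset_left
        have h2 : q.2.1 ∩ v = q.2.1 :=
          Finset.eq_of_subset_of_card_le Finset.inter_subset_left (by omega)
        have h3 : q.2.1 ⊆ v := by rw [← h2]; exact Finset.inter_subset_right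
        exact hyne (Finset.eq_of_subset_of_card_le h3 (by omega))
      have hintge : k - 2 ≤ (q.2.1 ∩ v).card := by
        have hcui := Finset.card_union_add_card_inter q.2.1 v
        have hsub : q.2.1 ∪ v ⊆ q.1 := Finset.union_subset hyx1 hv1
        have hle : (q.2.1 ∪ v).card ≤ q.1.card := Finset.card_le_card hsub
        omega
      exact ⟨hyne, by omega, hyzz, hxeq⟩
    -- the intersection z ∩ v has k - 2 elements
    obtain ⟨q₀, hq₀⟩ := hne
    obtain ⟨hyne₀, hyint₀, hyz₀, _⟩ := key q₀ hq₀
    have hzvle : (z ∩ v).card ≤ k - 2 := by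
      by_contra hcon
      push_neg at hcon
      have h2 : z ∩ v = v := Finset.eq_of_subset_of_card_le
        Finset.inter_subset_right (by omega)
      apply hvz
      rw [← h2]
      exact Finset.inter_subset_left
    have hzvcard : (z ∩ v).card = k - 2 := by
      have hsub : q₀.2.1 ∩ v ⊆ z ∩ v := Finset.inter_subset_inter_right hyz₀
      have := Finset.card_le_card hsub
      omega
    have hzdcard : (z \ v).card = 2 := by
      have := Finset.card_sdiff_add_card_inter z v
      omega
    calc F.card ≤ ((z \ v).image (fun c => insert c (z ∩ v))).card := by
          apply Finset.card_le_card_of_injOn (fun q => q.2.1)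
          · intro q hq
            obtain ⟨hyne, hyint, hyzz, hxeq⟩ := key q hq
            have hqF := Finset.mem_filter.mp hq
            obtain ⟨⟨_, hy1, _⟩, _, _, _⟩ := hmem q hqF.1
            have hycard : q.2.1.card = k - 1 := st14_mem_Lk1.mp hy1
            have hiv : q.2.1 ∩ v = z ∩ v := by
              apply Finset.eq_of_subset_of_card_le
                (Finset.inter_subset_inter_right hyzz)
              omega
            have hsd1 : (q.2.1 \ v).card = 1 := by
              have := Finset.card_sdiff_add_card_inter q.2.1 v
              omega
            obtain ⟨c, hc⟩ := Finset.card_eq_one.mp hsd1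
            have hcy : c ∈ q.2.1 \ v := by rw [hc]; exact Finset.mem_singleton_self c
            refine Finset.mem_image.mpr ⟨c, ?_, ?_⟩
            · rw [Finset.mem_sdiff]
              exact ⟨hyzz (Finset.mem_sdiff.mp hcy).1, (Finset.mem_sdiff.mp hcy).2⟩
            · have h5 : q.2.1 \ v ∪ q.2.1 ∩ v = q.2.1 := Finset.sdiff_union_inter _ _
              dsimp only
              rw [← h5, hiv, hc, ← Finset.insert_eq]
          · intro q hq q' hq' heq
            have heq' : q.2.1 = q'.2.1 := heq
            obtain ⟨_, _, _, hxeq⟩ := key q hq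
            obtain ⟨_, _, _, hxeq'⟩ := key q' hq'
            have hz1 : q.2.2 = z := (Finset.mem_filter.mp hq).2
            have hz2 : q'.2.2 = z := (Finset.mem_filter.mp hq').2
            apply Prod.ext
            · rw [hxeq, hxeq', heq']
            · exact Prod.ext heq' (by rw [hz1, hz2])
      _ ≤ (z \ v).card := Finset.card_image_le
      _ = 2 := hzdcard
  calc ∑ z ∈ st14_Z k A v, (T.filter (fun q => q.2.2 = z)).card
      ≤ ∑ z ∈ st14_Z k A v, (if v ⊆ z then 2 * k else 2) := by
        apply Finset.sum_le_sum
        intro z hz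
        by_cases hvz : v ⊆ z
        · rw [if_pos hvz]; exact hfiba z hz
        · rw [if_neg hvz]; exact hfibb z hz hvz
    _ ≤ 2 * k * k + 2 * (st14_Z k A v).card := by
        rw [Finset.sum_ite, Finset.sum_const, Finset.sum_const, smul_eq_mul, smul_eq_mul]
        have h1 : ((st14_Z k A v).filter (fun z => v ⊆ z)).card ≤ k := by
          calc ((st14_Z k A v).filter (fun z => v ⊆ z)).card
              ≤ ((Lk k).filter (fun z => v ⊆ z)).card := by
                apply Finset.card_le_card
                apply Finset.filter_subset_filter
                intro z hz
                exact hA (Finset.mem_filter.mp hz).1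
            _ = k := st14_card_supersets (by omega) (st14_mem_Lk1.mp hv)
        have h2 : ((st14_Z k A v).filter (fun z => ¬ v ⊆ z)).card ≤ (st14_Z k A v).card :=
          Finset.card_le_card (Finset.filter_subset _ _)
        nlinarith
lemma st14_sum_walk {k : ℕ} (hk : 1 ≤ k) {A : Finset (Finset (Fin (2 * k - 1)))}
    (hA : A ⊆ Lk k) :
    ∑ v ∈ Lk1 k, walkCount k A v ≤ A.card * (k * k * k) := by
  classical
  set U := ((A ×ˢ (Lk1 k ×ˢ A)).filter (fun q => q.2.1 ⊆ q.1 ∧ q.2.1 ⊆ q.2.2)) with hU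
  have hwc : ∀ v, walkCount k A v = (U.filter (fun q => v ⊆ q.1)).card := by
    intro v
    rw [hU, Finset.filter_filter]
    show ((A ×ˢ (Lk1 k ×ˢ A)).filter (fun q => v ⊆ q.1 ∧ q.2.1 ⊆ q.1 ∧ q.2.1 ⊆ q.2.2)).card = _
    congr 1
    apply Finset.filter_congr
    intro q _
    constructor
    · intro h; exact ⟨⟨h.2.1, h.2.2⟩, h.1⟩
    · intro h; exact ⟨h.2, h.1.1, h.1.2⟩
  have hstep : ∑ v ∈ Lk1 k, walkCount k A v = U.card * k := by
    calc ∑ v ∈ Lk1 k, walkCount k A v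
        = ∑ v ∈ Lk1 k, ∑ q ∈ U, (if v ⊆ q.1 then 1 else 0) := by
          refine Finset.sum_congr rfl fun v _ => ?_
          rw [hwc v, Finset.card_filter]
      _ = ∑ q ∈ U, ∑ v ∈ Lk1 k, (if v ⊆ q.1 then 1 else 0) := Finset.sum_comm
      _ = ∑ q ∈ U, ((Lk1 k).filter (fun v => v ⊆ q.1)).card := by
          refine Finset.sum_congr rfl fun q _ => ?_
          rw [Finset.card_filter]
      _ = ∑ q ∈ U, k := by
          refine Finset.sum_congr rfl fun q hq => ?_
          have hq1 : q.1 ∈ A := by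
            have h := Finset.mem_filter.mp hq
            exact (Finset.mem_product.mp h.1).1
          exact st14_card_subsets hk (hA hq1)
      _ = U.card * k := by rw [Finset.sum_const, smul_eq_mul]
  have hUcard : U.card ≤ A.card * (k * k) := by
    rw [hU, st14_card_filter_product A (Lk1 k ×ˢ A) (fun x r => r.1 ⊆ x ∧ r.1 ⊆ r.2)]
    have hinner : ∀ x ∈ A, ((Lk1 k ×ˢ A).filter
        (fun r => r.1 ⊆ x ∧ r.1 ⊆ r.2)).card ≤ k * k := by
      intro x hx
      rw [st14_card_filter_product (Lk1 k) A (fun y z => y ⊆ x ∧ y ⊆ z)]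
      calc ∑ y ∈ Lk1 k, (A.filter (fun z => y ⊆ x ∧ y ⊆ z)).card
          ≤ ∑ y ∈ Lk1 k, (if y ⊆ x then k else 0) := by
            apply Finset.sum_le_sum
            intro y hy
            by_cases hyx : y ⊆ x
            · rw [if_pos hyx]
              calc (A.filter (fun z => y ⊆ x ∧ y ⊆ z)).card
                  ≤ (A.filter (fun z => y ⊆ z)).card := by
                    apply Finset.card_le_card
                    apply Finset.monotone_filter_right
                    intro z _ hz; exact hz.2
                _ ≤ k := st14_d_le hk hA hy
            · rw [if_neg hyx]
              have : A.filter (fun z => y ⊆ x ∧ y ⊆ z) = ∅ := by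
                apply Finset.filter_false_of_mem
                intro z _ hc
                exact hyx hc.1
              rw [this, Finset.card_empty]
        _ = ((Lk1 k).filter (fun y => y ⊆ x)).card * k := by
            rw [Finset.sum_ite, Finset.sum_const, Finset.sum_const, smul_eq_mul,
              smul_eq_mul, mul_zero, add_zero]
        _ = k * k := by rw [st14_card_subsets hk (hA hx)]
    calc ∑ x ∈ A, ((Lk1 k ×ˢ A).filter (fun r => r.1 ⊆ x ∧ r.1 ⊆ r.2)).card
        ≤ ∑ x ∈ A, (k * k) := Finset.sum_le_sum hinner
      _ = A.card * (k * k) := by rw [Finset.sum_const, smul_eq_mul]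
  calc ∑ v ∈ Lk1 k, walkCount k A v = U.card * k := hstep
    _ ≤ A.card * (k * k) * k := Nat.mul_le_mul_right k hUcard
    _ = A.card * (k * k * k) := by ring
lemma st14_eventually : ∃ k₀ : ℕ, ∀ k : ℕ, k₀ ≤ k →
    3 ≤ k ∧ 1 ≤ Real.log k ∧ 6 * Real.log k ^ 5 ≤ k ∧
    4 * Real.exp 1 * Real.log k ^ 4 ≤ 3 * (k:ℝ) ^ ((3:ℝ)/10) := by
  have h1 : ∀ᶠ x : ℝ in Filter.atTop, 1 ≤ Real.log x :=
    Real.tendsto_log_atTop.eventually_ge_atTop 1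
  have h5 : ∀ᶠ x : ℝ in Filter.atTop, 6 * Real.log x ^ 5 ≤ x := by
    have ho : (fun x : ℝ => Real.log x ^ 5) =o[Filter.atTop] id :=
      Real.isLittleO_pow_log_id_atTop
    have hb := ho.bound (c := 1/6) (by norm_num)
    filter_upwards [hb, Filter.eventually_ge_atTop (1:ℝ), h1] with x hx hx1 hlog
    have : Real.log x ^ 5 ≤ 1/6 * x := by
      have h2 : ‖Real.log x ^ 5‖ = Real.log x ^ 5 := by
        rw [Real.norm_eq_abs, abs_of_nonneg (by positivity)]
      have h3 : ‖id x‖ = x := by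
        show ‖x‖ = x
        rw [Real.norm_eq_abs, abs_of_nonneg (by linarith)]
      rw [h2, h3] at hx
      exact hx
    linarith
  have h4 : ∀ᶠ x : ℝ in Filter.atTop,
      4 * Real.exp 1 * Real.log x ^ 4 ≤ 3 * x ^ ((3:ℝ)/10) := by
    have ho := isLittleO_log_rpow_rpow_atTop (s := (3:ℝ)/10) 4 (by norm_num)
    have hc : (0:ℝ) < 3 / (4 * Real.exp 1) := by positivity
    have hb := ho.bound hc
    filter_upwards [hb, Filter.eventually_ge_atTop (1:ℝ), h1] with x hx hx1 hlog
    have hxpos : (0:ℝ) < x := by linarith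
    have h2 : ‖Real.log x ^ (4:ℝ)‖ = Real.log x ^ 4 := by
      rw [Real.norm_eq_abs, abs_of_nonneg (Real.rpow_nonneg (by linarith) _)]
      rw [show ((4:ℝ)) = ((4:ℕ):ℝ) by norm_num, Real.rpow_natCast]
    have h3 : ‖x ^ ((3:ℝ)/10)‖ = x ^ ((3:ℝ)/10) := by
      rw [Real.norm_eq_abs, abs_of_nonneg (Real.rpow_nonneg hxpos.le _)]
    rw [h2, h3] at hx
    have hepos : (0:ℝ) < Real.exp 1 := Real.exp_pos 1
    calc 4 * Real.exp 1 * Real.log x ^ 4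
        ≤ 4 * Real.exp 1 * (3 / (4 * Real.exp 1) * x ^ ((3:ℝ)/10)) := by
          apply mul_le_mul_of_nonneg_left hx (by positivity)
      _ = 3 * x ^ ((3:ℝ)/10) := by field_simp
  have hall := (h1.and h5).and h4
  have hnat := (tendsto_natCast_atTop_atTop (R := ℝ)).eventually hall
  have hcomb := hnat.and (Filter.eventually_ge_atTop 3)
  obtain ⟨k₀, hk₀⟩ := Filter.eventually_atTop.mp hcomb
  exact ⟨k₀, fun k hk => ⟨(hk₀ k hk).2, (hk₀ k hk).1.1.1, (hk₀ k hk).1.1.2, (hk₀ k hk).1.2⟩⟩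

set_option maxHeartbeats 2000000 in
/-- For all large `k` and all `A ⊆ L_k` with
`t := |N(A)| − |A| ≥ |A|/(2k)` there is `R ⊆ A` with `|R| ≤ 18a(ln k)⁵/k³`,
`|E(N(R), L_k ∖ A)| ≤ 18t(ln k)⁵/k`, and `|G^h ∖ N(N(N(R)) ∩ A)| ≤ 9t/k^{1/5}`. -/
theorem statement_14 :
    ∃ k₀ : ℕ, ∀ k : ℕ, k₀ ≤ k →
      ∀ A : Finset (Finset (Fin (2 * k - 1))), A ⊆ Lk k →
        (A.card : ℝ) / (2 * k) ≤ ((nbrLow k A).card : ℝ) - A.card →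
        ∃ R ⊆ A,
          (R.card : ℝ) ≤ 18 * A.card * (Real.log k) ^ 5 / (k : ℝ) ^ 3 ∧
          (edgesBetween k (nbrLow k R) (Lk k \ A) : ℝ) ≤
            18 * (((nbrLow k A).card : ℝ) - A.card) * (Real.log k) ^ 5 / k ∧
          ((Gh k A \ nbrLow k (nbrHigh k (nbrLow k R) ∩ A)).card : ℝ) ≤
            9 * (((nbrLow k A).card : ℝ) - A.card) / (k : ℝ) ^ ((1 : ℝ) / 5) := by
  classical
  obtain ⟨k₀, hk₀⟩ := st14_eventually
  refine ⟨max k₀ 3, fun k hk A hA ht => ?_⟩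
  obtain ⟨hk3, hlog1, h6log, h4e⟩ := hk₀ k (le_trans (le_max_left _ _) hk)
  have hk1 : 1 ≤ k := by omega
  have hk3R : (3:ℝ) ≤ (k:ℝ) := by exact_mod_cast hk3
  have hkR : (0:ℝ) < (k:ℝ) := by linarith
  have hlogpos : (0:ℝ) < Real.log k := by linarith
  by_cases hA0 : A = ∅
  · subst hA0
    refine ⟨∅, Finset.Subset.refl _, ?_, ?_, ?_⟩
    · simp
    · have hnbr : nbrLow k (∅ : Finset (Finset (Fin (2*k-1)))) = ∅ := by simp [nbrLow]
      rw [hnbr]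
      have h0 : edgesBetween k ∅ (Lk k \ (∅ : Finset (Finset (Fin (2*k-1))))) = 0 := by
        simp [edgesBetween]
      rw [h0]
      simp
    · have hnbr : nbrLow k (∅ : Finset (Finset (Fin (2*k-1)))) = ∅ := by simp [nbrLow]
      have hGh : Gh k (∅ : Finset (Finset (Fin (2*k-1)))) = ∅ := by
        rw [Gh]
        apply Finset.filter_false_of_mem
        intro v _
        have hw : walkCount k ∅ v = 0 := by simp [walkCount]
        rw [hw]
        have hpos : (0:ℝ) < (k:ℝ)^3 / (2 * Real.log k ^ 4) := by positivity
        push_neg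
        exact_mod_cast hpos
      rw [hGh, hnbr]
      simp
  -- main case
  have haA : 0 < A.card := Finset.card_pos.mpr (Finset.nonempty_iff_ne_empty.mpr hA0)
  have ha1R : (1:ℝ) ≤ (A.card : ℝ) := by exact_mod_cast haA
  set a : ℕ := A.card with hadef
  set t : ℝ := ((nbrLow k A).card : ℝ) - (a:ℝ) with htdef
  have htpos : 0 < t := lt_of_lt_of_le (by positivity) ht
  have hta : (a:ℝ) ≤ 2 * k * t := by
    have h2k : (0:ℝ) < 2*k := by linarith
    rw [div_le_iff₀ h2k] at ht
    linarith
  set p : ℝ := 6 * Real.log k ^ 5 / (k:ℝ)^3 with hpdef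
  have hppos : 0 < p := by positivity
  have hpk2 : p * (k:ℝ)^2 ≤ 1 := by
    rw [hpdef, div_mul_eq_mul_div, div_le_one (by positivity)]
    nlinarith [h6log, hkR]
  have hp1 : p < 1 := by nlinarith [hpk2, hppos, hk3R]
  have hq0 : (0:ℝ) < 1 - p := by linarith
  set W : Finset (Finset (Fin (2*k-1))) → ℝ :=
    fun R => p ^ R.card * (1-p) ^ (a - R.card) with hWdef
  have hWpos : ∀ R : Finset (Finset (Fin (2*k-1))), 0 < W R :=
    fun R => mul_pos (pow_pos hppos _) (pow_pos hq0 _)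
  have hWsum : ∑ R ∈ A.powerset, W R = 1 := st14_sum_w_one A p
  -- Expectation 1
  have hE1 : ∑ R ∈ A.powerset, W R * (R.card : ℝ) = p * a := by
    have hcard : ∀ R ∈ A.powerset, ((R.card : ℝ))
        = ∑ x ∈ A, (if x ∈ R then (1:ℝ) else 0) := by
      intro R hR
      have hRA := Finset.mem_powerset.mp hR
      rw [Finset.sum_ite_mem, Finset.inter_eq_right.mpr hRA, Finset.sum_const,
        nsmul_eq_mul, mul_one]
    calc ∑ R ∈ A.powerset, W R * (R.card : ℝ)
        = ∑ R ∈ A.powerset, ∑ x ∈ A, W R * (if x ∈ R then (1:ℝ) else 0) := by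
          refine Finset.sum_congr rfl fun R hR => ?_
          rw [hcard R hR, Finset.mul_sum]
      _ = ∑ x ∈ A, ∑ R ∈ A.powerset, W R * (if x ∈ R then (1:ℝ) else 0) :=
          Finset.sum_comm
      _ = ∑ x ∈ A, p := by
          refine Finset.sum_congr rfl fun x hx => ?_
          have hsub : ({x} : Finset (Finset (Fin (2*k-1)))) ⊆ A :=
            Finset.singleton_subset_iff.mpr hx
          have hconv : ∀ R : Finset (Finset (Fin (2*k-1))),
              (if x ∈ R then (1:ℝ) else 0)
                = (if ¬ Disjoint R {x} then (1:ℝ) else 0) := by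
            intro R
            refine if_congr ?_ rfl rfl
            rw [Finset.disjoint_singleton_right, not_not]
          calc ∑ R ∈ A.powerset, W R * (if x ∈ R then (1:ℝ) else 0)
              = ∑ R ∈ A.powerset, W R * (if ¬ Disjoint R {x} then (1:ℝ) else 0) :=
                Finset.sum_congr rfl fun R _ => by rw [hconv R]
            _ = 1 - (1-p) ^ ({x} : Finset (Finset (Fin (2*k-1)))).card :=
                st14_sum_w_hit A {x} hsub p
            _ = p := by rw [Finset.card_singleton, pow_one]; ring
      _ = p * a := by rw [Finset.sum_const, nsmul_eq_mul, mul_comm]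
  -- Expectation 2
  have hE2 : ∑ R ∈ A.powerset,
      W R * (edgesBetween k (nbrLow k R) (Lk k \ A) : ℝ) ≤ p * ((k:ℝ)^2 * t) := by
    set C : Finset (Finset (Fin (2*k-1))) := Lk k \ A with hCdef
    set P2 := (Lk1 k ×ˢ C).filter (fun e => e.1 ⊆ e.2) with hP2def
    have hX2eq : ∀ R ∈ A.powerset,
        (edgesBetween k (nbrLow k R) C : ℝ)
          = ∑ e ∈ P2, (if ¬ Disjoint R (A.filter (fun u => e.1 ⊆ u)) then (1:ℝ) else 0) := by
      intro R hR
      have hRA := Finset.mem_powerset.mp hR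
      have hsets : ((nbrLow k R ×ˢ C).filter (fun q => q.1 ⊆ q.2))
          = P2.filter (fun e => e.1 ∈ nbrLow k R) := by
        ext e
        simp only [hP2def, Finset.mem_filter, Finset.mem_product, nbrLow]
        tauto
      have hiff : ∀ e ∈ P2, (e.1 ∈ nbrLow k R
          ↔ ¬ Disjoint R (A.filter (fun u => e.1 ⊆ u))) := by
        intro e he
        have he1 : e.1 ∈ Lk1 k := by
          have := Finset.mem_filter.mp he
          exact (Finset.mem_product.mp this.1).1
        constructor
        · intro hmem
          obtain ⟨_, u, huR, hsub⟩ := Finset.mem_filter.mp hmem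
          exact Finset.not_disjoint_iff.mpr
            ⟨u, huR, Finset.mem_filter.mpr ⟨hRA huR, hsub⟩⟩
        · intro hnd
          obtain ⟨u, huR, huf⟩ := Finset.not_disjoint_iff.mp hnd
          exact Finset.mem_filter.mpr ⟨he1, u, huR, (Finset.mem_filter.mp huf).2⟩
      rw [edgesBetween, hsets, Finset.card_filter]
      push_cast
      refine Finset.sum_congr rfl fun e he => ?_
      exact if_congr (hiff e he) rfl rfl
    have hswap : ∑ R ∈ A.powerset,
        W R * (edgesBetween k (nbrLow k R) C : ℝ)
        = ∑ e ∈ P2, (1 - (1-p) ^ (A.filter (fun u => e.1 ⊆ u)).card) := by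
      calc ∑ R ∈ A.powerset, W R * (edgesBetween k (nbrLow k R) C : ℝ)
          = ∑ R ∈ A.powerset, ∑ e ∈ P2,
              W R * (if ¬ Disjoint R (A.filter (fun u => e.1 ⊆ u)) then (1:ℝ) else 0) := by
            refine Finset.sum_congr rfl fun R hR => ?_
            rw [hX2eq R hR, Finset.mul_sum]
        _ = ∑ e ∈ P2, ∑ R ∈ A.powerset,
              W R * (if ¬ Disjoint R (A.filter (fun u => e.1 ⊆ u)) then (1:ℝ) else 0) :=
            Finset.sum_comm
        _ = ∑ e ∈ P2, (1 - (1-p) ^ (A.filter (fun u => e.1 ⊆ u)).card) := by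
            refine Finset.sum_congr rfl fun e _ => ?_
            exact st14_sum_w_hit A _ (Finset.filter_subset _ _) p
    rw [hswap]
    have hbern : ∀ e ∈ P2, (1 - (1-p) ^ (A.filter (fun u => e.1 ⊆ u)).card)
        ≤ p * ((A.filter (fun u => e.1 ⊆ u)).card : ℝ) := by
      intro e _
      have := st14_bernoulli p (by linarith) (A.filter (fun u => e.1 ⊆ u)).card
      linarith [this]
    calc ∑ e ∈ P2, (1 - (1-p) ^ (A.filter (fun u => e.1 ⊆ u)).card)
        ≤ ∑ e ∈ P2, p * ((A.filter (fun u => e.1 ⊆ u)).card : ℝ) :=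
          Finset.sum_le_sum hbern
      _ = p * ∑ e ∈ P2, ((A.filter (fun u => e.1 ⊆ u)).card : ℝ) := by
          rw [Finset.mul_sum]
      _ ≤ p * ((k:ℝ)^2 * t) := by
          apply mul_le_mul_of_nonneg_left _ hppos.le
          -- the combinatorial edge bound
          have hstep1 : ∑ e ∈ P2, ((A.filter (fun u => e.1 ⊆ u)).card : ℝ)
              = ∑ y ∈ Lk1 k, ((A.filter (fun u => y ⊆ u)).card : ℝ)
                  * ((C.filter (fun u => y ⊆ u)).card : ℝ) := by
            rw [hP2def, Finset.sum_filter, Finset.sum_product]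
            refine Finset.sum_congr rfl fun y _ => ?_
            dsimp only
            rw [← Finset.sum_filter]
            rw [Finset.sum_congr rfl (g := fun _ => ((A.filter (fun u => y ⊆ u)).card : ℝ))
              (fun _ _ => rfl), Finset.sum_const, nsmul_eq_mul, mul_comm]
          have hdeg : ∀ y ∈ Lk1 k, (A.filter (fun u => y ⊆ u)).card
              + (C.filter (fun u => y ⊆ u)).card = k := by
            intro y hy
            rw [hCdef, st14_deg_split hA (fun u => y ⊆ u)]
            exact st14_card_supersets hk1 (st14_mem_Lk1.mp hy)
          have hNsub : nbrLow k A ⊆ Lk1 k := Finset.filter_subset _ _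
          have hdzero : ∀ y ∈ Lk1 k, y ∉ nbrLow k A →
              (A.filter (fun u => y ⊆ u)) = ∅ := by
            intro y hy hyn
            rw [Finset.filter_eq_empty_iff]
            intro u hu hsub
            exact hyn (Finset.mem_filter.mpr ⟨hy, u, hu, hsub⟩)
          have hstep2 : ∑ y ∈ Lk1 k, ((A.filter (fun u => y ⊆ u)).card : ℝ)
                  * ((C.filter (fun u => y ⊆ u)).card : ℝ)
              = ∑ y ∈ nbrLow k A, ((A.filter (fun u => y ⊆ u)).card : ℝ)
                  * ((C.filter (fun u => y ⊆ u)).card : ℝ) := by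
            symm
            apply Finset.sum_subset hNsub
            intro y hy hyn
            rw [hdzero y hy hyn]
            simp
          have hdsum : ∑ y ∈ nbrLow k A, ((A.filter (fun u => y ⊆ u)).card : ℝ)
              = (k:ℝ) * a := by
            have h1 : ∑ y ∈ nbrLow k A, ((A.filter (fun u => y ⊆ u)).card : ℝ)
                = ∑ y ∈ Lk1 k, ((A.filter (fun u => y ⊆ u)).card : ℝ) := by
              apply Finset.sum_subset hNsub
              intro y hy hyn
              rw [hdzero y hy hyn]
              simp
            rw [h1]
            have h2 : ∀ y ∈ Lk1 k, ((A.filter (fun u => y ⊆ u)).card : ℝ)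
                = ∑ x ∈ A, (if y ⊆ x then (1:ℝ) else 0) := by
              intro y _
              rw [Finset.card_filter]
              push_cast
              rfl
            rw [Finset.sum_congr rfl h2, Finset.sum_comm]
            have h3 : ∀ x ∈ A, ∑ y ∈ Lk1 k, (if y ⊆ x then (1:ℝ) else 0) = (k:ℝ) := by
              intro x hx
              rw [← Finset.sum_filter, Finset.sum_const, nsmul_eq_mul, mul_one]
              exact_mod_cast st14_card_subsets hk1 (hA hx)
            rw [Finset.sum_congr rfl h3, Finset.sum_const, nsmul_eq_mul, mul_comm]
          calc ∑ e ∈ P2, ((A.filter (fun u => e.1 ⊆ u)).card : ℝ)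
              = ∑ y ∈ nbrLow k A, ((A.filter (fun u => y ⊆ u)).card : ℝ)
                  * ((C.filter (fun u => y ⊆ u)).card : ℝ) := by
                rw [hstep1, hstep2]
            _ ≤ ∑ y ∈ nbrLow k A, (k:ℝ) * ((C.filter (fun u => y ⊆ u)).card : ℝ) := by
                apply Finset.sum_le_sum
                intro y hy
                apply mul_le_mul_of_nonneg_right _ (by positivity)
                exact_mod_cast st14_d_le hk1 hA (hNsub hy)
            _ = (k:ℝ) * ∑ y ∈ nbrLow k A, ((C.filter (fun u => y ⊆ u)).card : ℝ) := by
                rw [Finset.mul_sum]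
            _ = (k:ℝ) * ∑ y ∈ nbrLow k A,
                  ((k:ℝ) - ((A.filter (fun u => y ⊆ u)).card : ℝ)) := by
                congr 1
                refine Finset.sum_congr rfl fun y hy => ?_
                have := hdeg y (hNsub hy)
                have h4 : ((A.filter (fun u => y ⊆ u)).card : ℝ)
                    + ((C.filter (fun u => y ⊆ u)).card : ℝ) = (k:ℝ) := by
                  exact_mod_cast this
                linarith
            _ = (k:ℝ) * ((k:ℝ) * ((nbrLow k A).card : ℝ) - (k:ℝ) * a) := by
                rw [Finset.sum_sub_distrib, Finset.sum_const, nsmul_eq_mul, hdsum]; ring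
            _ = (k:ℝ)^2 * t := by rw [htdef]; ring

  -- Expectation 3
  have hGsub : Gh k A ⊆ Lk1 k := Finset.filter_subset _ _
  have hE3 : ∑ R ∈ A.powerset,
      W R * ((Gh k A \ nbrLow k (nbrHigh k (nbrLow k R) ∩ A)).card : ℝ)
        ≤ 3 * t / (k:ℝ) ^ ((1:ℝ)/5) := by
    have hX3eq : ∀ R : Finset (Finset (Fin (2*k-1))),
        ((Gh k A \ nbrLow k (nbrHigh k (nbrLow k R) ∩ A)).card : ℝ)
          = ∑ v ∈ Gh k A,
              (if v ∉ nbrLow k (nbrHigh k (nbrLow k R) ∩ A) then (1:ℝ) else 0) := by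
      intro R
      rw [Finset.sdiff_eq_filter, Finset.card_filter]
      push_cast
      rfl
    have hEswap : ∑ R ∈ A.powerset,
        W R * ((Gh k A \ nbrLow k (nbrHigh k (nbrLow k R) ∩ A)).card : ℝ)
          ≤ ∑ v ∈ Gh k A, (1-p) ^ (st14_Z k A v).card := by
      calc ∑ R ∈ A.powerset,
          W R * ((Gh k A \ nbrLow k (nbrHigh k (nbrLow k R) ∩ A)).card : ℝ)
          = ∑ R ∈ A.powerset, ∑ v ∈ Gh k A,
              W R * (if v ∉ nbrLow k (nbrHigh k (nbrLow k R) ∩ A) then (1:ℝ) else 0) := by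
            refine Finset.sum_congr rfl fun R _ => ?_
            rw [hX3eq R, Finset.mul_sum]
        _ = ∑ v ∈ Gh k A, ∑ R ∈ A.powerset,
              W R * (if v ∉ nbrLow k (nbrHigh k (nbrLow k R) ∩ A) then (1:ℝ) else 0) :=
            Finset.sum_comm
        _ ≤ ∑ v ∈ Gh k A, ∑ R ∈ A.powerset,
              W R * (if Disjoint R (st14_Z k A v) then (1:ℝ) else 0) := by
            refine Finset.sum_le_sum fun v hv => Finset.sum_le_sum fun R hR => ?_
            apply mul_le_mul_of_nonneg_left _ (hWpos R).le
            by_cases hd : Disjoint R (st14_Z k A v)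
            · rw [if_pos hd]
              split <;> norm_num
            · rw [if_neg (not_not.mpr
                (st14_cover hA (hGsub hv) (Finset.mem_powerset.mp hR) hd)), if_neg hd]
        _ = ∑ v ∈ Gh k A, (1-p) ^ (st14_Z k A v).card := by
            refine Finset.sum_congr rfl fun v _ => ?_
            exact st14_sum_w_disj A (st14_Z k A v) (Finset.filter_subset _ _) p
    have hperv : ∀ v ∈ Gh k A, ((1:ℝ)-p) ^ (st14_Z k A v).card
        ≤ Real.exp 1 * Real.exp (-(3/2 * Real.log k)) := by
      intro v hv
      have hthr : (k:ℝ)^3 / (2 * Real.log k ^ 4) ≤ (walkCount k A v : ℝ) :=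
        (Finset.mem_filter.mp hv).2
      have hwle : (walkCount k A v : ℝ)
          ≤ 2*(k:ℝ)*(k:ℝ) + 2*((st14_Z k A v).card : ℝ) := by
        have := st14_walk_le hk3 hA (hGsub hv)
        exact_mod_cast this
      have hZge : (k:ℝ)^3/(4 * Real.log k^4) - (k:ℝ)^2
          ≤ ((st14_Z k A v).card : ℝ) := by
        have hhalf : (k:ℝ)^3/(2 * Real.log k^4)/2 = (k:ℝ)^3/(4*Real.log k^4) := by
          ring
        nlinarith [hthr, hwle]
      have hkey : p * ((k:ℝ)^3/(4*Real.log k^4)) = 3/2 * Real.log k := by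
        rw [hpdef]
        field_simp
        ring
      have hpZ : 3/2 * Real.log k - 1 ≤ p * ((st14_Z k A v).card : ℝ) := by
        have h5 := mul_le_mul_of_nonneg_left hZge hppos.le
        rw [mul_sub, hkey] at h5
        nlinarith [hpk2]
      calc ((1:ℝ)-p) ^ (st14_Z k A v).card
          ≤ Real.exp (-(p * ((st14_Z k A v).card:ℝ))) :=
            st14_pow_le_exp p hppos.le hp1.le _
        _ ≤ Real.exp (-(3/2 * Real.log k - 1)) := Real.exp_le_exp.mpr (by linarith)
        _ = Real.exp 1 * Real.exp (-(3/2 * Real.log k)) := by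
            rw [← Real.exp_add]
            ring_nf
    have hGhbound : ((Gh k A).card : ℝ) * ((k:ℝ)^3/(2*Real.log k^4))
        ≤ (a:ℝ) * (k:ℝ)^3 := by
      have h1 : ∑ _v ∈ Gh k A, ((k:ℝ)^3/(2*Real.log k^4))
          ≤ ∑ v ∈ Gh k A, (walkCount k A v : ℝ) :=
        Finset.sum_le_sum fun v hv => (Finset.mem_filter.mp hv).2
      have h2 : ∑ v ∈ Gh k A, (walkCount k A v : ℝ)
          ≤ ∑ v ∈ Lk1 k, (walkCount k A v : ℝ) :=
        Finset.sum_le_sum_of_subset_of_nonneg hGsub (fun v _ _ => by positivity)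
      have h3 : ∑ v ∈ Lk1 k, (walkCount k A v : ℝ) ≤ (a:ℝ) * (k:ℝ)^3 := by
        have h4 := st14_sum_walk hk1 hA
        have h5 : ((∑ v ∈ Lk1 k, walkCount k A v : ℕ) : ℝ)
            ≤ ((A.card * (k*k*k) : ℕ) : ℝ) := by exact_mod_cast h4
        push_cast at h5
        calc ∑ v ∈ Lk1 k, (walkCount k A v : ℝ)
            = ((∑ v ∈ Lk1 k, walkCount k A v : ℕ) : ℝ) := by push_cast; rfl
          _ ≤ (A.card : ℝ) * ((k:ℝ)*(k:ℝ)*(k:ℝ)) := by push_cast; linarith [h5]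
          _ = (a:ℝ) * (k:ℝ)^3 := by rw [hadef]; ring
      rw [Finset.sum_const, nsmul_eq_mul] at h1
      linarith
    have hGhcard : ((Gh k A).card : ℝ) ≤ 2 * a * Real.log k^4 := by
      have hthrpos : (0:ℝ) < (k:ℝ)^3/(2*Real.log k^4) := by positivity
      have h6 := (div_le_div_iff_of_pos_right hthrpos).mpr hGhbound
      calc ((Gh k A).card : ℝ)
          = ((Gh k A).card : ℝ) * ((k:ℝ)^3/(2*Real.log k^4))
              / ((k:ℝ)^3/(2*Real.log k^4)) := by field_simp
        _ ≤ ((a:ℝ) * (k:ℝ)^3) / ((k:ℝ)^3/(2*Real.log k^4)) := h6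
        _ = 2 * a * Real.log k^4 := by field_simp
    have hexp_eq : Real.exp (-(3/2 * Real.log k)) = (k:ℝ) ^ ((-3/2 : ℝ)) := by
      rw [Real.rpow_def_of_pos hkR]
      ring_nf
    have hk12 : (k:ℝ) * (k:ℝ) ^ ((-3/2 : ℝ)) = (k:ℝ) ^ ((-1/2 : ℝ)) := by
      calc (k:ℝ) * (k:ℝ) ^ ((-3/2:ℝ)) = (k:ℝ)^((1:ℝ)) * (k:ℝ)^((-3/2:ℝ)) := by
            rw [Real.rpow_one]
        _ = (k:ℝ) ^ ((1:ℝ) + (-3/2)) := (Real.rpow_add hkR _ _).symm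
        _ = (k:ℝ) ^ ((-1/2 : ℝ)) := by norm_num
    have hk310 : (k:ℝ) ^ ((3:ℝ)/10) * (k:ℝ) ^ ((-1/2:ℝ)) = (k:ℝ) ^ ((-1/5 : ℝ)) := by
      rw [← Real.rpow_add hkR]
      norm_num
    have hk15 : (k:ℝ) ^ ((-1/5 : ℝ)) = ((k:ℝ) ^ ((1:ℝ)/5))⁻¹ := by
      rw [← Real.rpow_neg hkR.le]
      norm_num
    calc ∑ R ∈ A.powerset,
        W R * ((Gh k A \ nbrLow k (nbrHigh k (nbrLow k R) ∩ A)).card : ℝ)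
        ≤ ∑ v ∈ Gh k A, (1-p) ^ (st14_Z k A v).card := hEswap
      _ ≤ ∑ _v ∈ Gh k A, Real.exp 1 * Real.exp (-(3/2 * Real.log k)) :=
          Finset.sum_le_sum hperv
      _ = ((Gh k A).card : ℝ) * (Real.exp 1 * Real.exp (-(3/2 * Real.log k))) := by
          rw [Finset.sum_const, nsmul_eq_mul]
      _ ≤ (2 * a * Real.log k^4) * (Real.exp 1 * Real.exp (-(3/2 * Real.log k))) := by
          apply mul_le_mul_of_nonneg_right hGhcard (by positivity)
      _ ≤ (2 * (2*(k:ℝ)*t) * Real.log k^4) * (Real.exp 1 * Real.exp (-(3/2 * Real.log k))) := by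
          apply mul_le_mul_of_nonneg_right _ (by positivity)
          have hL4 : (0:ℝ) ≤ Real.log k ^ 4 := by positivity
          nlinarith [hta]
      _ = (4 * Real.exp 1 * Real.log k^4) * (t * ((k:ℝ) * Real.exp (-(3/2 * Real.log k)))) := by
          ring
      _ ≤ (3 * (k:ℝ) ^ ((3:ℝ)/10)) * (t * ((k:ℝ) * Real.exp (-(3/2 * Real.log k)))) := by
          apply mul_le_mul_of_nonneg_right h4e
          have := Real.exp_pos (-(3/2 * Real.log k))
          positivity
      _ = 3 * t / (k:ℝ) ^ ((1:ℝ)/5) := by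
          rw [hexp_eq, hk12, eq_div_iff (ne_of_gt (Real.rpow_pos_of_pos hkR ((1:ℝ)/5)))]
          have hprod : (k:ℝ)^((3:ℝ)/10) * ((k:ℝ)^((-1/2:ℝ)) * (k:ℝ)^((1:ℝ)/5)) = 1 := by
            rw [← Real.rpow_add hkR, ← Real.rpow_add hkR]
            norm_num
          linear_combination 3 * t * hprod
  -- the Markov / union argument
  by_contra hcon
  push_neg at hcon
  have hB1pos : (0:ℝ) < 18 * (a:ℝ) * Real.log k ^ 5 / (k:ℝ)^3 := by positivity
  have hB2pos : (0:ℝ) < 18 * t * Real.log k ^ 5 / (k:ℝ) := by positivity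
  have hB3pos : (0:ℝ) < 9 * t / (k:ℝ) ^ ((1:ℝ)/5) := by
    have := Real.rpow_pos_of_pos hkR ((1:ℝ)/5)
    positivity
  have hface : ∀ R ∈ A.powerset,
      (1:ℝ) < ((R.card:ℝ)) / (18 * (a:ℝ) * Real.log k ^ 5 / (k:ℝ)^3)
        + ((edgesBetween k (nbrLow k R) (Lk k \ A) : ℝ)) / (18 * t * Real.log k ^ 5 / (k:ℝ))
        + (((Gh k A \ nbrLow k (nbrHigh k (nbrLow k R) ∩ A)).card : ℝ))
            / (9 * t / (k:ℝ) ^ ((1:ℝ)/5)) := by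
    intro R hR
    have hRA := Finset.mem_powerset.mp hR
    have hn1 : (0:ℝ) ≤ ((R.card:ℝ)) / (18 * (a:ℝ) * Real.log k ^ 5 / (k:ℝ)^3) := by
      positivity
    have hn2 : (0:ℝ) ≤ ((edgesBetween k (nbrLow k R) (Lk k \ A) : ℝ))
        / (18 * t * Real.log k ^ 5 / (k:ℝ)) := by positivity
    have hn3 : (0:ℝ) ≤ (((Gh k A \ nbrLow k (nbrHigh k (nbrLow k R) ∩ A)).card : ℝ))
        / (9 * t / (k:ℝ) ^ ((1:ℝ)/5)) := by positivity
    by_cases h1 : ((R.card:ℝ)) ≤ 18 * (a:ℝ) * Real.log k ^ 5 / (k:ℝ)^3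
    · by_cases h2 : ((edgesBetween k (nbrLow k R) (Lk k \ A) : ℝ))
          ≤ 18 * t * Real.log k ^ 5 / (k:ℝ)
      · have h3 := hcon R hRA h1 h2
        have : (1:ℝ) < (((Gh k A \ nbrLow k (nbrHigh k (nbrLow k R) ∩ A)).card : ℝ))
            / (9 * t / (k:ℝ) ^ ((1:ℝ)/5)) := (one_lt_div hB3pos).mpr h3
        linarith
      · have : (1:ℝ) < ((edgesBetween k (nbrLow k R) (Lk k \ A) : ℝ))
            / (18 * t * Real.log k ^ 5 / (k:ℝ)) := (one_lt_div hB2pos).mpr (not_le.mp h2)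
        linarith
    · have : (1:ℝ) < ((R.card:ℝ)) / (18 * (a:ℝ) * Real.log k ^ 5 / (k:ℝ)^3) :=
        (one_lt_div hB1pos).mpr (not_le.mp h1)
      linarith
  have h1lt : (1:ℝ) < ∑ R ∈ A.powerset, W R *
      (((R.card:ℝ)) / (18 * (a:ℝ) * Real.log k ^ 5 / (k:ℝ)^3)
        + ((edgesBetween k (nbrLow k R) (Lk k \ A) : ℝ)) / (18 * t * Real.log k ^ 5 / (k:ℝ))
        + (((Gh k A \ nbrLow k (nbrHigh k (nbrLow k R) ∩ A)).card : ℝ))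
            / (9 * t / (k:ℝ) ^ ((1:ℝ)/5))) := by
    calc (1:ℝ) = ∑ R ∈ A.powerset, W R := hWsum.symm
      _ < _ := by
        apply Finset.sum_lt_sum_of_nonempty (Finset.powerset_nonempty A)
        intro R hR
        calc W R = W R * 1 := (mul_one _).symm
          _ < _ := mul_lt_mul_of_pos_left (hface R hR) (hWpos R)
  have hsplit : ∑ R ∈ A.powerset, W R *
      (((R.card:ℝ)) / (18 * (a:ℝ) * Real.log k ^ 5 / (k:ℝ)^3)
        + ((edgesBetween k (nbrLow k R) (Lk k \ A) : ℝ)) / (18 * t * Real.log k ^ 5 / (k:ℝ))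
        + (((Gh k A \ nbrLow k (nbrHigh k (nbrLow k R) ∩ A)).card : ℝ))
            / (9 * t / (k:ℝ) ^ ((1:ℝ)/5)))
      = (∑ R ∈ A.powerset, W R * ((R.card:ℝ)))
            / (18 * (a:ℝ) * Real.log k ^ 5 / (k:ℝ)^3)
        + (∑ R ∈ A.powerset, W R * ((edgesBetween k (nbrLow k R) (Lk k \ A) : ℝ)))
            / (18 * t * Real.log k ^ 5 / (k:ℝ))
        + (∑ R ∈ A.powerset,
              W R * (((Gh k A \ nbrLow k (nbrHigh k (nbrLow k R) ∩ A)).card : ℝ)))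
            / (9 * t / (k:ℝ) ^ ((1:ℝ)/5)) := by
    calc ∑ R ∈ A.powerset, W R *
        (((R.card:ℝ)) / (18 * (a:ℝ) * Real.log k ^ 5 / (k:ℝ)^3)
          + ((edgesBetween k (nbrLow k R) (Lk k \ A) : ℝ)) / (18 * t * Real.log k ^ 5 / (k:ℝ))
          + (((Gh k A \ nbrLow k (nbrHigh k (nbrLow k R) ∩ A)).card : ℝ))
              / (9 * t / (k:ℝ) ^ ((1:ℝ)/5)))
        = ∑ R ∈ A.powerset,
            ((W R * ((R.card:ℝ))) / (18 * (a:ℝ) * Real.log k ^ 5 / (k:ℝ)^3)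
            + (W R * ((edgesBetween k (nbrLow k R) (Lk k \ A) : ℝ)))
                / (18 * t * Real.log k ^ 5 / (k:ℝ))
            + (W R * (((Gh k A \ nbrLow k (nbrHigh k (nbrLow k R) ∩ A)).card : ℝ)))
                / (9 * t / (k:ℝ) ^ ((1:ℝ)/5))) :=
          Finset.sum_congr rfl fun R _ => by ring
      _ = _ := by
          rw [Finset.sum_add_distrib, Finset.sum_add_distrib, ← Finset.sum_div,
            ← Finset.sum_div, ← Finset.sum_div]
  have hc1 : (∑ R ∈ A.powerset, W R * ((R.card:ℝ)))
      / (18 * (a:ℝ) * Real.log k ^ 5 / (k:ℝ)^3) = 1/3 := by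
    rw [hE1, hpdef]
    field_simp
    ring
  have hc2 : (∑ R ∈ A.powerset, W R * ((edgesBetween k (nbrLow k R) (Lk k \ A) : ℝ)))
      / (18 * t * Real.log k ^ 5 / (k:ℝ)) ≤ 1/3 := by
    have heq : p * ((k:ℝ)^2 * t) = (18 * t * Real.log k ^ 5 / (k:ℝ)) / 3 := by
      rw [hpdef]
      field_simp
      ring
    rw [div_le_iff₀ hB2pos]
    calc ∑ R ∈ A.powerset, W R * ((edgesBetween k (nbrLow k R) (Lk k \ A) : ℝ))
        ≤ p * ((k:ℝ)^2 * t) := hE2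
      _ = (18 * t * Real.log k ^ 5 / (k:ℝ)) / 3 := heq
      _ = 1/3 * (18 * t * Real.log k ^ 5 / (k:ℝ)) := by ring
  have hc3 : (∑ R ∈ A.powerset,
        W R * (((Gh k A \ nbrLow k (nbrHigh k (nbrLow k R) ∩ A)).card : ℝ)))
      / (9 * t / (k:ℝ) ^ ((1:ℝ)/5)) ≤ 1/3 := by
    rw [div_le_iff₀ hB3pos]
    calc ∑ R ∈ A.powerset,
          W R * (((Gh k A \ nbrLow k (nbrHigh k (nbrLow k R) ∩ A)).card : ℝ))
        ≤ 3 * t / (k:ℝ) ^ ((1:ℝ)/5) := hE3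
      _ = 1/3 * (9 * t / (k:ℝ) ^ ((1:ℝ)/5)) := by ring
  rw [hsplit, hc1] at h1lt
  linarith
end

section
/- For every k ≥ 1, every A ⊆ L_k, every F′ ⊆ N(A), and every real ψ > 0, there exists H ⊆ A with |H| ≤ |N(A) ∖ F′|/ψ such that, setting F″ = F′ ∪ N(H), every v ∈ A satisfies |N(v) ∩ (N(A) ∖ F″)| ≤ ψ. -/
open MeasureTheory Finset Filter

lemma nbrLow_union' (k : ℕ) (B C : Finset (Finset (Fin (2 * k - 1)))) :
    nbrLow k (B ∪ C) = nbrLow k B ∪ nbrLow k C := by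
  ext w
  simp only [nbrLow, Finset.mem_filter, Finset.mem_union]
  aesop

lemma nbrLow_empty' (k : ℕ) : nbrLow k (∅ : Finset (Finset (Fin (2 * k - 1)))) = ∅ := by
  simp [nbrLow]

lemma nbrLow_mono' (k : ℕ) {B C : Finset (Finset (Fin (2 * k - 1)))} (h : B ⊆ C) :
    nbrLow k B ⊆ nbrLow k C := by
  intro w hw
  simp only [nbrLow, Finset.mem_filter] at hw ⊢
  obtain ⟨h1, u, hu, hwu⟩ := hw
  exact ⟨h1, u, h hu, hwu⟩

lemma statement_15_aux (k : ℕ) (A : Finset (Finset (Fin (2 * k - 1)))) (ψ : ℝ) (hψ : 0 < ψ) :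
    ∀ n : ℕ, ∀ F' : Finset (Finset (Fin (2 * k - 1))), F' ⊆ nbrLow k A →
      (nbrLow k A \ F').card ≤ n →
    ∃ H ⊆ A, (H.card : ℝ) ≤ ((nbrLow k A \ F').card : ℝ) / ψ ∧
      ∀ v ∈ A,
        (((nbrLow k {v}) ∩ (nbrLow k A \ (F' ∪ nbrLow k H))).card : ℝ) ≤ ψ := by
  intro n
  induction n with
  | zero =>
    intro F' hF hcard
    refine ⟨∅, Finset.empty_subset _, by simp only [Finset.card_empty, Nat.cast_zero]; positivity, ?_⟩
    intro v hv
    have h0 : nbrLow k A \ F' = ∅ := Finset.card_eq_zero.mp (Nat.le_zero.mp hcard)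
    rw [nbrLow_empty', Finset.union_empty, h0, Finset.inter_empty]
    simpa using hψ.le
  | succ n ih =>
    intro F' hF hcard
    by_cases hgood : ∀ v ∈ A, (((nbrLow k {v}) ∩ (nbrLow k A \ F')).card : ℝ) ≤ ψ
    · refine ⟨∅, Finset.empty_subset _, by simp only [Finset.card_empty, Nat.cast_zero]; positivity, ?_⟩
      intro v hv
      rw [nbrLow_empty', Finset.union_empty]
      exact hgood v hv
    · push_neg at hgood
      obtain ⟨v, hv, hvbig⟩ := hgood
      set S := nbrLow k A \ F' with hS
      set T := nbrLow k {v} with hT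
      have hTsub : T ⊆ nbrLow k A := nbrLow_mono' k (by simpa using hv)
      have hF'' : F' ∪ T ⊆ nbrLow k A := Finset.union_subset hF hTsub
      have hSdiff : nbrLow k A \ (F' ∪ T) = S \ T := by
        rw [hS]; ext w; simp only [Finset.mem_sdiff, Finset.mem_union]; tauto
      have hcardeq : (S \ T).card + (T ∩ S).card = S.card := by
        rw [Finset.inter_comm]
        exact Finset.card_sdiff_add_card_inter S T
      have hTSpos : 1 ≤ (T ∩ S).card := by
        rcases Nat.eq_zero_or_pos (T ∩ S).card with h0 | h
        · exfalso
          rw [h0] at hvbig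
          simp only [Nat.cast_zero] at hvbig
          linarith
        · exact h
      have hle : (S \ T).card ≤ n := by omega
      obtain ⟨H', hH'A, hH'card, hH'good⟩ := ih (F' ∪ T) hF'' (by rw [hSdiff]; exact hle)
      refine ⟨insert v H', Finset.insert_subset hv hH'A, ?_, ?_⟩
      · have h1 : ((insert v H').card : ℝ) ≤ (H'.card : ℝ) + 1 := by
          have := Finset.card_insert_le v H'
          exact_mod_cast this
        have h2 : ((S \ T).card : ℝ) ≤ (S.card : ℝ) - ψ := by
          have : (ψ : ℝ) < ((T ∩ S).card : ℝ) := hvbig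
          have heq : ((S \ T).card : ℝ) + ((T ∩ S).card : ℝ) = (S.card : ℝ) := by
            exact_mod_cast hcardeq
          linarith
        rw [hSdiff] at hH'card
        calc ((insert v H').card : ℝ) ≤ (H'.card : ℝ) + 1 := h1
          _ ≤ ((S \ T).card : ℝ) / ψ + 1 := by linarith
          _ ≤ ((S.card : ℝ) - ψ) / ψ + 1 := by gcongr
          _ = (S.card : ℝ) / ψ := by field_simp; ring
      · intro u hu
        have hnbr : nbrLow k (insert v H') = T ∪ nbrLow k H' := by
          rw [show insert v H' = {v} ∪ H' from rfl, nbrLow_union']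
        rw [hnbr]
        have : F' ∪ (T ∪ nbrLow k H') = (F' ∪ T) ∪ nbrLow k H' := by
          rw [Finset.union_assoc]
        rw [this]
        exact hH'good u hu

/-- For every `k ≥ 1`, `A ⊆ L_k`, `F′ ⊆ N(A)` and real `ψ > 0`, there is
`H ⊆ A` with `|H| ≤ |N(A) ∖ F′|/ψ` such that, with `F″ = F′ ∪ N(H)`, every `v ∈ A` has
`|N(v) ∩ (N(A) ∖ F″)| ≤ ψ`. -/
theorem statement_15 (k : ℕ) (hk : 1 ≤ k) (A F' : Finset (Finset (Fin (2 * k - 1))))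
    (hA : A ⊆ Lk k) (hF : F' ⊆ nbrLow k A) (ψ : ℝ) (hψ : 0 < ψ) :
    ∃ H ⊆ A, (H.card : ℝ) ≤ ((nbrLow k A \ F').card : ℝ) / ψ ∧
      ∀ v ∈ A,
        (((nbrLow k {v}) ∩ (nbrLow k A \ (F' ∪ nbrLow k H))).card : ℝ) ≤ ψ := by
  exact statement_15_aux k A ψ hψ (nbrLow k A \ F').card F' hF le_rfl
end

section
/- For every k ≥ 1, every A ⊆ L_k, every S″ ⊆ L_k with A ⊆ S″, and every real ψ > 0, there exists U ⊆ (L_{k−1} ∖ N(A)) ∩ N(S″) with |U| ≤ |S″ ∖ A|/ψ such that every v ∈ L_{k−1} ∖ N(A) satisfies |N(v) ∩ (S″ ∖ N(U))| ≤ ψ. -/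
open MeasureTheory Finset Filter

/-- For every `k ≥ 1`, `A ⊆ S″ ⊆ L_k` and real `ψ > 0`, there is
`U ⊆ (L_{k-1} ∖ N(A)) ∩ N(S″)` with `|U| ≤ |S″ ∖ A|/ψ` such that every
`v ∈ L_{k-1} ∖ N(A)` has `|N(v) ∩ (S″ ∖ N(U))| ≤ ψ`. -/
theorem statement_16 (k : ℕ) (hk : 1 ≤ k) (A S'' : Finset (Finset (Fin (2 * k - 1))))
    (hA : A ⊆ S'') (hS : S'' ⊆ Lk k) (ψ : ℝ) (hψ : 0 < ψ) :
    ∃ U ⊆ (Lk1 k \ nbrLow k A) ∩ nbrLow k S'',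
      (U.card : ℝ) ≤ ((S'' \ A).card : ℝ) / ψ ∧
      ∀ v ∈ Lk1 k \ nbrLow k A,
        (((nbrHigh k {v}) ∩ (S'' \ nbrHigh k U)).card : ℝ) ≤ ψ := by
  classical
  have key : ∀ n : ℕ, ∀ U : Finset (Finset (Fin (2 * k - 1))),
      U ⊆ (Lk1 k \ nbrLow k A) ∩ nbrLow k S'' →
      ((S'' \ A) \ nbrHigh k U).card = n →
      ψ * U.card + (((S'' \ A) \ nbrHigh k U).card : ℝ) ≤ ((S'' \ A).card : ℝ) →
      ∃ U' ⊆ (Lk1 k \ nbrLow k A) ∩ nbrLow k S'',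
        (U'.card : ℝ) ≤ ((S'' \ A).card : ℝ) / ψ ∧
        ∀ v ∈ Lk1 k \ nbrLow k A,
          (((nbrHigh k {v}) ∩ (S'' \ nbrHigh k U')).card : ℝ) ≤ ψ := by
    intro n
    induction n using Nat.strong_induction_on with
    | _ n ih =>
      intro U hUsub hcard hinv
      by_cases hgood : ∀ v ∈ Lk1 k \ nbrLow k A,
          (((nbrHigh k {v}) ∩ (S'' \ nbrHigh k U)).card : ℝ) ≤ ψ
      · refine ⟨U, hUsub, ?_, hgood⟩
        rw [le_div_iff₀ hψ]
        have h0 : (0 : ℝ) ≤ (((S'' \ A) \ nbrHigh k U).card : ℝ) := by positivity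
        nlinarith
      · push_neg at hgood
        obtain ⟨v, hv, hbig⟩ := hgood
        set R := nbrHigh k {v} ∩ (S'' \ nbrHigh k U) with hR
        have hvLk1 : v ∈ Lk1 k := (Finset.mem_sdiff.mp hv).1
        have hvA : v ∉ nbrLow k A := (Finset.mem_sdiff.mp hv).2
        have hRpos : 0 < R.card := by
          by_contra h
          push_neg at h
          interval_cases hc : R.card
          · simp [hc] at hbig; linarith
        obtain ⟨u0, hu0⟩ := Finset.card_pos.mp hRpos
        have hu0' := Finset.mem_inter.mp hu0
        have hu0S : u0 ∈ S'' := (Finset.mem_sdiff.mp hu0'.2).1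
        have hvu0 : v ⊆ u0 := by
          have := (Finset.mem_filter.mp hu0'.1).2
          simpa using this
        have hvS : v ∈ nbrLow k S'' := by
          simp only [nbrLow, Finset.mem_filter]
          exact ⟨hvLk1, u0, hu0S, hvu0⟩
        have hvU : v ∉ U := by
          intro hvU
          have : u0 ∈ nbrHigh k U := by
            simp only [nbrHigh, Finset.mem_filter]
            exact ⟨(Finset.mem_filter.mp hu0'.1).1, v, hvU, hvu0⟩
          exact (Finset.mem_sdiff.mp hu0'.2).2 this
        -- R ⊆ (S'' \ A) \ nbrHigh k U
        have hRsub : R ⊆ (S'' \ A) \ nbrHigh k U := by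
          intro u hu
          have hu' := Finset.mem_inter.mp hu
          have huS : u ∈ S'' := (Finset.mem_sdiff.mp hu'.2).1
          have huNU : u ∉ nbrHigh k U := (Finset.mem_sdiff.mp hu'.2).2
          have hvu : v ⊆ u := by
            have := (Finset.mem_filter.mp hu'.1).2
            simpa using this
          have huA : u ∉ A := by
            intro huA
            exact hvA (by
              simp only [nbrLow, Finset.mem_filter]
              exact ⟨hvLk1, u, huA, hvu⟩)
          exact Finset.mem_sdiff.mpr ⟨Finset.mem_sdiff.mpr ⟨huS, huA⟩, huNU⟩
        set U' := insert v U with hU'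
        have hnbr : nbrHigh k U' = nbrHigh k {v} ∪ nbrHigh k U := by
          ext u
          simp only [nbrHigh, Finset.mem_union, Finset.mem_filter, hU',
            Finset.mem_insert, Finset.mem_singleton]
          constructor
          · rintro ⟨hu, w, (rfl | hw), hwu⟩
            · exact Or.inl ⟨hu, w, rfl, hwu⟩
            · exact Or.inr ⟨hu, w, hw, hwu⟩
          · rintro (⟨hu, w, rfl, hwu⟩ | ⟨hu, w, hw, hwu⟩)
            · exact ⟨hu, w, Or.inl rfl, hwu⟩
            · exact ⟨hu, w, Or.inr hw, hwu⟩
        have hset : (S'' \ A) \ nbrHigh k U' = ((S'' \ A) \ nbrHigh k U) \ R := by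
          ext u
          simp only [hnbr, hR, Finset.mem_sdiff, Finset.mem_union, Finset.mem_inter]
          tauto
        have hcard' : ((S'' \ A) \ nbrHigh k U').card
            = ((S'' \ A) \ nbrHigh k U).card - R.card := by
          rw [hset, Finset.card_sdiff_of_subset hRsub]
        have hRle : R.card ≤ ((S'' \ A) \ nbrHigh k U).card :=
          Finset.card_le_card hRsub
        have hsmaller : ((S'' \ A) \ nbrHigh k U').card < n := by
          rw [hcard', ← hcard]
          omega
        have hU'sub : U' ⊆ (Lk1 k \ nbrLow k A) ∩ nbrLow k S'' := by
          intro w hw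
          rcases Finset.mem_insert.mp hw with rfl | hw
          · exact Finset.mem_inter.mpr ⟨hv, hvS⟩
          · exact hUsub hw
        have hU'card : U'.card = U.card + 1 := Finset.card_insert_of_notMem hvU
        have hinv' : ψ * U'.card + (((S'' \ A) \ nbrHigh k U').card : ℝ)
            ≤ ((S'' \ A).card : ℝ) := by
          have h1 : (((S'' \ A) \ nbrHigh k U').card : ℝ)
              = (((S'' \ A) \ nbrHigh k U).card : ℝ) - R.card := by
            rw [hcard']
            push_cast [Nat.cast_sub hRle]
            ring
          rw [hU'card, h1]
          push_cast
          nlinarith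
        exact ih _ hsmaller U' hU'sub rfl hinv'
  have h0 : nbrHigh k (∅ : Finset (Finset (Fin (2 * k - 1)))) = ∅ := by
    simp [nbrHigh, Finset.filter_eq_empty_iff]
  refine key ((S'' \ A) \ nbrHigh k ∅).card ∅ (by simp) rfl ?_
  rw [h0]
  simp
end

section
/- Let k ≥ 1 and 0 < ψ < k. Let A ⊆ S ⊆ L_k, let G = N(A), let t = |G| − |A|, and let F ⊆ G. Suppose every v ∈ S satisfies |N(v) ∩ F| ≥ k − ψ and every v ∈ L_{k−1} ∖ F satisfies |N(v) ∩ S| ≤ ψ. Then |S| ≤ |F| + 2tψ/(k − ψ). -/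
open MeasureTheory Finset Filter

lemma mem_Lk {k : ℕ} {u} : u ∈ Lk k ↔ u.card = k := by
  simp [Lk, Finset.mem_powersetCard]

lemma mem_Lk1 {k : ℕ} {w} : w ∈ Lk1 k ↔ w.card = k - 1 := by
  simp [Lk1, Finset.mem_powersetCard]

lemma card_nbrLow_single {k : ℕ} (hk : 1 ≤ k) {v} (hv : v ∈ Lk k) :
    (nbrLow k {v}).card = k := by
  have : nbrLow k {v} = v.powersetCard (k - 1) := by
    ext w
    simp only [nbrLow, mem_filter, mem_Lk1, Finset.mem_powersetCard, mem_singleton]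
    constructor
    · rintro ⟨h1, u, rfl, h2⟩; exact ⟨h2, h1⟩
    · rintro ⟨h1, h2⟩; exact ⟨h2, v, rfl, h1⟩
  rw [this, Finset.card_powersetCard, mem_Lk.1 hv]
  have := Nat.choose_symm (n := k) (k := 1) hk
  simp only [Nat.choose_one_right] at this
  omega

lemma card_nbrHigh_single {k : ℕ} (hk : 1 ≤ k) {w} (hw : w ∈ Lk1 k) :
    (nbrHigh k {w}).card = k := by
  have hwc : w.card = k - 1 := mem_Lk1.1 hw
  have himg : nbrHigh k {w} = wᶜ.image (fun x => insert x w) := by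
    ext u
    simp only [nbrHigh, mem_filter, mem_Lk, mem_singleton, Finset.mem_image, Finset.mem_compl]
    constructor
    · rintro ⟨hc, w', rfl, hsub⟩
      have h1 : (u \ w').card = 1 := by
        rw [Finset.card_sdiff_of_subset hsub, hc, hwc]; omega
      obtain ⟨x, hx⟩ := Finset.card_eq_one.1 h1
      have hxm : x ∈ u \ w' := hx ▸ Finset.mem_singleton_self x
      rw [Finset.mem_sdiff] at hxm
      refine ⟨x, hxm.2, ?_⟩
      have := Finset.sdiff_union_of_subset hsub
      rw [← this, hx]
      rw [Finset.insert_eq]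
    · rintro ⟨x, hx, rfl⟩
      refine ⟨?_, w, rfl, Finset.subset_insert _ _⟩
      rw [Finset.card_insert_of_notMem hx, hwc]; omega
  have hinj : Set.InjOn (fun x => insert x w) ↑wᶜ := by
    intro x hx y hy hxy
    simp only [Finset.coe_compl, Set.mem_compl_iff, Finset.mem_coe] at hx hy
    simp only at hxy
    have : x ∈ insert y w := hxy ▸ Finset.mem_insert_self x w
    rcases Finset.mem_insert.1 this with h | h
    · exact h
    · exact absurd h hx
  rw [himg, Finset.card_image_of_injOn hinj, Finset.card_compl, hwc]
  simp only [Fintype.card_fin]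
  omega

-- swap sums (double counting)
lemma sum_swap_count {k : ℕ} {X Y : Finset (Finset (Fin (2 * k - 1)))}
    (hX : X ⊆ Lk k) (hY : Y ⊆ Lk1 k) :
    ∑ v ∈ X, (nbrLow k {v} ∩ Y).card = ∑ w ∈ Y, (nbrHigh k {w} ∩ X).card := by
  have h1 : ∀ v ∈ X, (nbrLow k {v} ∩ Y) = Y.filter (fun w => w ⊆ v) := by
    intro v hv
    ext w
    simp only [nbrLow, Finset.mem_inter, mem_filter, mem_singleton]
    constructor
    · rintro ⟨⟨_, u, rfl, h⟩, hw⟩; exact ⟨hw, h⟩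
    · rintro ⟨hw, h⟩; exact ⟨⟨hY hw, v, rfl, h⟩, hw⟩
  have h2 : ∀ w ∈ Y, (nbrHigh k {w} ∩ X) = X.filter (fun v => w ⊆ v) := by
    intro w hw
    ext v
    simp only [nbrHigh, Finset.mem_inter, mem_filter, mem_singleton]
    constructor
    · rintro ⟨⟨_, u, rfl, h⟩, hv⟩; exact ⟨hv, h⟩
    · rintro ⟨hv, h⟩; exact ⟨⟨hX hv, w, rfl, h⟩, hv⟩
  calc ∑ v ∈ X, (nbrLow k {v} ∩ Y).card
      = ∑ v ∈ X, (Y.filter (fun w => w ⊆ v)).card :=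
        Finset.sum_congr rfl (fun v hv => by rw [h1 v hv])
    _ = ∑ w ∈ Y, (X.filter (fun v => w ⊆ v)).card := by
        simp only [Finset.card_filter]; exact Finset.sum_comm
    _ = ∑ w ∈ Y, (nbrHigh k {w} ∩ X).card :=
        Finset.sum_congr rfl (fun w hw => by rw [h2 w hw])

open FinsetFamily in
lemma card_le_card_nbrLow {k : ℕ} (hk : 1 ≤ k) {A : Finset (Finset (Fin (2 * k - 1)))}
    (hA : A ⊆ Lk k) : A.card ≤ (nbrLow k A).card := by
  have hsized : (A : Set (Finset (Fin (2 * k - 1)))).Sized k := by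
    intro u hu
    exact mem_Lk.1 (hA hu)
  have hlym := Finset.card_mul_le_card_shadow_mul hsized
  have hcard : Fintype.card (Fin (2 * k - 1)) - k + 1 = k := by
    simp only [Fintype.card_fin]; omega
  rw [hcard] at hlym
  have hsub : ∂ A ⊆ nbrLow k A := by
    intro w hw
    obtain ⟨s, hs, a, ha, rfl⟩ := Finset.mem_shadow_iff.1 hw
    simp only [nbrLow, mem_filter, mem_Lk1]
    refine ⟨?_, s, hs, Finset.erase_subset _ _⟩
    rw [Finset.card_erase_of_mem ha, mem_Lk.1 (hA hs)]
  have := Finset.card_le_card hsub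
  have hk0 : 0 < k := hk
  nlinarith


/-- Let `k ≥ 1`, `0 < ψ < k`, `A ⊆ S ⊆ L_k`, `G = N(A)`,
`t = |G| − |A|`, `F ⊆ G`. If every `v ∈ S` has `|N(v) ∩ F| ≥ k − ψ` and every
`v ∈ L_{k-1} ∖ F` has `|N(v) ∩ S| ≤ ψ`, then `|S| ≤ |F| + 2tψ/(k − ψ)`. -/
theorem statement_17 (k : ℕ) (hk : 1 ≤ k) (ψ : ℝ) (hψ0 : 0 < ψ) (hψk : ψ < k)
    (A S F : Finset (Finset (Fin (2 * k - 1))))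
    (hAS : A ⊆ S) (hS : S ⊆ Lk k) (hF : F ⊆ nbrLow k A)
    (h1 : ∀ v ∈ S, (k : ℝ) - ψ ≤ (((nbrLow k {v}) ∩ F).card : ℝ))
    (h2 : ∀ v ∈ Lk1 k \ F, (((nbrHigh k {v}) ∩ S).card : ℝ) ≤ ψ) :
    (S.card : ℝ) ≤ (F.card : ℝ) +
      2 * (((nbrLow k A).card : ℝ) - (A.card : ℝ)) * ψ / ((k : ℝ) - ψ) := by
  classical
  set G := nbrLow k A with hG
  have hA : A ⊆ Lk k := hAS.trans hS
  have hGL : G ⊆ Lk1 k := Finset.filter_subset _ _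
  have hFL : F ⊆ Lk1 k := hF.trans hGL
  have hSA : S \ A ⊆ Lk k := (Finset.sdiff_subset).trans hS
  have hGF : G \ F ⊆ Lk1 k := (Finset.sdiff_subset).trans hGL
  -- neighborhoods of A-vertices land in G
  have hNvG : ∀ v ∈ A, nbrLow k {v} ⊆ G := by
    intro v hv w hw
    rw [hG]
    simp only [nbrLow, Finset.mem_filter, Finset.mem_singleton] at hw ⊢
    refine ⟨hw.1, v, hv, ?_⟩
    obtain ⟨u, hu, hsub⟩ := hw.2
    exact hu ▸ hsub
  -- Step 3/4: for w ∈ F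
  have step3 : ∀ w ∈ F, (nbrHigh k {w} ∩ (S \ A)).card + (nbrHigh k {w} ∩ A).card ≤ k := by
    intro w hw
    have hdeg : (nbrHigh k {w}).card = k := card_nbrHigh_single hk (hFL hw)
    have hdisj : Disjoint (nbrHigh k {w} ∩ (S \ A)) (nbrHigh k {w} ∩ A) :=
      (Finset.sdiff_disjoint).mono (Finset.inter_subset_right) (Finset.inter_subset_right)
    calc (nbrHigh k {w} ∩ (S \ A)).card + (nbrHigh k {w} ∩ A).card
        = ((nbrHigh k {w} ∩ (S \ A)) ∪ (nbrHigh k {w} ∩ A)).card :=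
          (Finset.card_union_of_disjoint hdisj).symm
      _ ≤ (nbrHigh k {w}).card := Finset.card_le_card (by
          apply Finset.union_subset <;> exact Finset.inter_subset_left)
      _ = k := hdeg
  -- Step 6: for v ∈ A
  have step6 : ∀ v ∈ A, (nbrLow k {v} ∩ F).card + (nbrLow k {v} ∩ (G \ F)).card = k := by
    intro v hv
    have hNG : nbrLow k {v} ⊆ G := hNvG v hv
    have heq : nbrLow k {v} ∩ (G \ F) = nbrLow k {v} \ F := by
      ext w
      simp only [Finset.mem_inter, Finset.mem_sdiff]
      constructor
      · rintro ⟨h, _, hnf⟩; exact ⟨h, hnf⟩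
      · rintro ⟨h, hnf⟩; exact ⟨h, hNG h, hnf⟩
    rw [heq, Finset.card_inter_add_card_sdiff]
    exact card_nbrLow_single hk (hA hv)
  -- named sums (ℕ)
  set x1 := ∑ v ∈ S \ A, (nbrLow k {v} ∩ F).card with hx1
  set x2 := ∑ v ∈ A, (nbrLow k {v} ∩ F).card with hx2
  set x3 := ∑ v ∈ A, (nbrLow k {v} ∩ (G \ F)).card with hx3
  -- E2 : x1 + x2 ≤ k * F.card
  have E2 : x1 + x2 ≤ k * F.card := by
    have e1 : x1 = ∑ w ∈ F, (nbrHigh k {w} ∩ (S \ A)).card := sum_swap_count hSA hFL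
    have e2 : x2 = ∑ w ∈ F, (nbrHigh k {w} ∩ A).card := sum_swap_count hA hFL
    rw [e1, e2, ← Finset.sum_add_distrib]
    calc ∑ w ∈ F, ((nbrHigh k {w} ∩ (S \ A)).card + (nbrHigh k {w} ∩ A).card)
        ≤ ∑ _w ∈ F, k := Finset.sum_le_sum step3
      _ = k * F.card := by rw [Finset.sum_const, smul_eq_mul, mul_comm]
  -- E3 : x2 + x3 = k * A.card
  have E3 : x2 + x3 = k * A.card := by
    rw [← Finset.sum_add_distrib]
    calc ∑ v ∈ A, ((nbrLow k {v} ∩ F).card + (nbrLow k {v} ∩ (G \ F)).card)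
        = ∑ _v ∈ A, k := Finset.sum_congr rfl step6
      _ = k * A.card := by rw [Finset.sum_const, smul_eq_mul, mul_comm]
  -- E4 : (x3 : ℝ) ≤ ψ * (G \ F).card
  have E4 : (x3 : ℝ) ≤ ψ * ((G \ F).card : ℝ) := by
    have e3 : x3 = ∑ w ∈ G \ F, (nbrHigh k {w} ∩ A).card := sum_swap_count hA hGF
    rw [e3]
    push_cast
    calc ∑ w ∈ G \ F, ((nbrHigh k {w} ∩ A).card : ℝ)
        ≤ ∑ w ∈ G \ F, ((nbrHigh k {w} ∩ S).card : ℝ) := by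
          apply Finset.sum_le_sum
          intro w hw
          exact_mod_cast Finset.card_le_card (Finset.inter_subset_inter le_rfl hAS)
      _ ≤ ∑ _w ∈ G \ F, ψ := by
          apply Finset.sum_le_sum
          intro w hw
          apply h2
          rw [Finset.mem_sdiff] at hw ⊢
          exact ⟨hGL hw.1, hw.2⟩
      _ = ψ * ((G \ F).card : ℝ) := by rw [Finset.sum_const, nsmul_eq_mul, mul_comm]
  -- E5 : (k - ψ) * (S \ A).card ≤ x1
  have E5 : ((k : ℝ) - ψ) * (((S \ A).card : ℕ) : ℝ) ≤ (x1 : ℝ) := by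
    rw [hx1]
    push_cast
    calc ((k : ℝ) - ψ) * ((S \ A).card : ℝ)
        = ∑ _v ∈ S \ A, ((k : ℝ) - ψ) := by rw [Finset.sum_const, nsmul_eq_mul, mul_comm]
      _ ≤ ∑ v ∈ S \ A, ((nbrLow k {v} ∩ F).card : ℝ) := by
          apply Finset.sum_le_sum
          intro v hv
          exact h1 v (Finset.mem_sdiff.1 hv).1
  -- cardinalities
  have hcSA : ((S \ A).card : ℝ) = (S.card : ℝ) - (A.card : ℝ) := by
    rw [Finset.card_sdiff_of_subset hAS, Nat.cast_sub (Finset.card_le_card hAS)]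
  have hcGF : ((G \ F).card : ℝ) = (G.card : ℝ) - (F.card : ℝ) := by
    rw [Finset.card_sdiff_of_subset hF, Nat.cast_sub (Finset.card_le_card hF)]
  have ht : (A.card : ℝ) ≤ (G.card : ℝ) := by
    exact_mod_cast card_le_card_nbrLow hk hA
  have hden : (0:ℝ) < (k:ℝ) - ψ := by linarith
  have c1 : (x1:ℝ) + (x2:ℝ) ≤ (k:ℝ) * (F.card:ℝ) := by exact_mod_cast E2
  have c2 : (x2:ℝ) + (x3:ℝ) = (k:ℝ) * (A.card:ℝ) := by exact_mod_cast E3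
  rw [hcGF] at E4
  rw [hcSA] at E5
  have hψt : (0:ℝ) ≤ ψ * ((G.card:ℝ) - (A.card:ℝ)) := mul_nonneg hψ0.le (by linarith)
  have key : ((k:ℝ) - ψ) * ((S.card:ℝ) - (F.card:ℝ)) ≤ 2 * ((G.card:ℝ) - (A.card:ℝ)) * ψ := by
    nlinarith [E4, E5, c1, c2, hψt]
  rw [← sub_le_iff_le_add', le_div_iff₀ hden]
  nlinarith [key]
end

section
/- There exist a constant C > 0 and k₀ such that for all k ≥ k₀ and all A ⊆ L_k, we have |N(A) ∖ G^h| ≤ C·(|N(A)| − |A|), where G^h denotes the set of vertices v ∈ L_{k−1} for which the number of walks v,x,y,z in M with x ∈ A and z ∈ A is at least k³/(2(ln k)⁴). -/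
open MeasureTheory Finset Filter

lemma subsets_card (k : ℕ) (hk : 1 ≤ k) (x : Finset (Fin (2*k-1))) (hx : x ∈ Lk k) :
    ((Lk1 k).filter (fun y => y ⊆ x)).card = k := by
  have hxc : x.card = k := by
    simpa [Lk, Finset.mem_powersetCard] using hx
  have heq : (Lk1 k).filter (fun y => y ⊆ x) = x.powersetCard (k-1) := by
    ext y
    simp only [Lk1, Finset.mem_filter, Finset.mem_powersetCard, Finset.subset_univ, true_and]
    tauto
  have h1 : k - (k-1) = 1 := by omega
  rw [heq, Finset.card_powersetCard, hxc, ← Nat.choose_symm (Nat.sub_le k 1), h1,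
    Nat.choose_one_right]

lemma supersets_card (k : ℕ) (hk : 1 ≤ k) (y : Finset (Fin (2*k-1))) (hy : y ∈ Lk1 k) :
    ((Lk k).filter (fun x => y ⊆ x)).card = k := by
  have hyc : y.card = k - 1 := by simpa [Lk1, Finset.mem_powersetCard] using hy
  have himg : (Lk k).filter (fun x => y ⊆ x) = yᶜ.image (fun a => insert a y) := by
    ext x
    simp only [Finset.mem_filter, Finset.mem_image, Finset.mem_compl]
    constructor
    · rintro ⟨hxL, hsub⟩
      have hxc : x.card = k := by simpa [Lk, Finset.mem_powersetCard] using hxL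
      have hne : (x \ y).Nonempty := by
        rw [← Finset.card_pos, Finset.card_sdiff_of_subset hsub]; omega
      obtain ⟨a, ha⟩ := hne
      have haxy := Finset.mem_sdiff.mp ha
      refine ⟨a, haxy.2, ?_⟩
      have hsub2 : insert a y ⊆ x := Finset.insert_subset haxy.1 hsub
      have hcard : (insert a y).card = k := by
        rw [Finset.card_insert_of_notMem haxy.2, hyc]; omega
      exact Finset.eq_of_subset_of_card_le hsub2 (by rw [hxc, hcard])
    · rintro ⟨a, hay, rfl⟩
      refine ⟨?_, Finset.subset_insert a y⟩
      simp only [Lk, Finset.mem_powersetCard, Finset.subset_univ, true_and]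
      rw [Finset.card_insert_of_notMem hay, hyc]; omega
  rw [himg, Finset.card_image_of_injOn, Finset.card_compl, hyc]
  · simp only [Fintype.card_fin]; omega
  · intro a ha b hb h
    simp only [Finset.mem_coe, Finset.mem_compl] at ha hb
    have h2 : insert a y = insert b y := h
    have : a ∈ insert b y := h2 ▸ Finset.mem_insert_self a y
    rcases Finset.mem_insert.mp this with h' | h'
    · exact h'
    · exact absurd h' ha

/-- There are `C > 0` and `k₀` such that for all `k ≥ k₀` and `A ⊆ L_k`,
`|N(A) ∖ G^h| ≤ C(|N(A)| − |A|)`. -/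
theorem statement_18 :
    ∃ C : ℝ, 0 < C ∧ ∃ k₀ : ℕ, ∀ k : ℕ, k₀ ≤ k →
      ∀ A : Finset (Finset (Fin (2 * k - 1))), A ⊆ Lk k →
        ((nbrLow k A \ Gh k A).card : ℝ) ≤ C * (((nbrLow k A).card : ℝ) - A.card) := by
  classical
  refine ⟨5, by norm_num, 8, fun k hk A hA => ?_⟩
  have hk1 : 1 ≤ k := by omega
  set dA : Finset (Fin (2*k-1)) → ℕ := fun y => (A.filter (fun x => y ⊆ x)).card with hdA
  set Nx : Finset (Fin (2*k-1)) → Finset (Finset (Fin (2*k-1))) :=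
    fun x => (Lk1 k).filter (fun y => y ⊆ x) with hNx
  set defx : Finset (Fin (2*k-1)) → ℕ := fun x => ∑ y ∈ Nx x, (k - dA y) with hdefx
  have F1 : ∀ x ∈ A, (Nx x).card = k := fun x hx => subsets_card k hk1 x (hA hx)
  have F2 : ∀ y ∈ Lk1 k, dA y ≤ k := by
    intro y hy
    calc dA y ≤ ((Lk k).filter (fun x => y ⊆ x)).card :=
          Finset.card_le_card (Finset.filter_subset_filter _ hA)
      _ = k := supersets_card k hk1 y hy
  -- swap lemmas
  have swap1 : ∀ f : Finset (Fin (2*k-1)) → ℕ,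
      ∑ v ∈ Lk1 k, ∑ x ∈ A.filter (fun x => v ⊆ x), f x = ∑ x ∈ A, k * f x := by
    intro f
    calc ∑ v ∈ Lk1 k, ∑ x ∈ A.filter (fun x => v ⊆ x), f x
        = ∑ v ∈ Lk1 k, ∑ x ∈ A, if v ⊆ x then f x else 0 := by
          simp [Finset.sum_filter]
      _ = ∑ x ∈ A, ∑ v ∈ Lk1 k, if v ⊆ x then f x else 0 := Finset.sum_comm
      _ = ∑ x ∈ A, k * f x := by
          refine Finset.sum_congr rfl fun x hx => ?_
          rw [← Finset.sum_filter, Finset.sum_const]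
          rw [show ((Lk1 k).filter fun v => v ⊆ x) = Nx x from rfl, F1 x hx, smul_eq_mul]
  have swap2 : ∀ g : Finset (Fin (2*k-1)) → ℕ,
      ∑ x ∈ A, ∑ y ∈ Nx x, g y = ∑ y ∈ Lk1 k, dA y * g y := by
    intro g
    calc ∑ x ∈ A, ∑ y ∈ Nx x, g y
        = ∑ x ∈ A, ∑ y ∈ Lk1 k, if y ⊆ x then g y else 0 := by
          simp [hNx, Finset.sum_filter]
      _ = ∑ y ∈ Lk1 k, ∑ x ∈ A, if y ⊆ x then g y else 0 := Finset.sum_comm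
      _ = ∑ y ∈ Lk1 k, dA y * g y := by
          refine Finset.sum_congr rfl fun y hy => ?_
          rw [← Finset.sum_filter, Finset.sum_const, smul_eq_mul]
  -- walk identity
  have F3 : ∀ v, walkCount k A v
      = ∑ x ∈ A.filter (fun x => v ⊆ x), ∑ y ∈ Nx x, dA y := by
    intro v
    have hdz : ∀ y, dA y = ∑ z ∈ A, if y ⊆ z then 1 else 0 :=
      fun y => Finset.card_filter _ _
    rw [walkCount, Finset.card_filter, Finset.sum_product, Finset.sum_filter]
    refine Finset.sum_congr rfl fun x hx => ?_
    rw [Finset.sum_product]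
    by_cases hvx : v ⊆ x
    · simp only [hvx, if_true, true_and]
      rw [hNx]
      simp only [Finset.sum_filter]
      refine Finset.sum_congr rfl fun y hy => ?_
      by_cases hyx : y ⊆ x
      · simp only [hyx, if_true, true_and]
        exact (hdz y).symm
      · simp [hyx]
    · simp [hvx]
  have F4 : ∀ x ∈ A, (∑ y ∈ Nx x, dA y) + defx x = k * k := by
    intro x hx
    rw [hdefx, ← Finset.sum_add_distrib]
    have hterm : ∀ y ∈ Nx x, dA y + (k - dA y) = k := by
      intro y hy
      have hyL : y ∈ Lk1 k := (Finset.mem_filter.mp hy).1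
      have := F2 y hyL; omega
    rw [Finset.sum_congr rfl hterm, Finset.sum_const, F1 x hx, smul_eq_mul]
  -- defect
  set N := nbrLow k A with hN
  have hNsub : N ⊆ Lk1 k := Finset.filter_subset _ _
  set Δ : ℕ := ∑ v ∈ N, (k - dA v) with hΔdef
  have hdA_zero : ∀ v ∈ Lk1 k, v ∉ N → dA v = 0 := by
    intro v hv hvN
    rw [hdA]
    simp only
    rw [Finset.card_eq_zero, Finset.filter_eq_empty_iff]
    intro u hu hvu
    exact hvN (Finset.mem_filter.mpr ⟨hv, ⟨u, hu, hvu⟩⟩)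
  have hsumdA : ∑ v ∈ N, dA v = k * A.card := by
    have h1 : ∑ v ∈ Lk1 k, dA v = k * A.card := by
      have h := swap1 (fun _ => 1)
      simp only [Finset.sum_const, smul_eq_mul, mul_one] at h
      exact h.trans (Nat.mul_comm _ _)
    rw [← h1]
    exact Finset.sum_subset hNsub (fun v hv hvN => hdA_zero v hv hvN)
  have hΔeq : k * N.card = k * A.card + Δ := by
    have h1 : ∑ v ∈ N, (dA v + (k - dA v)) = k * N.card := by
      have : ∀ v ∈ N, dA v + (k - dA v) = k := by
        intro v hv; have := F2 v (hNsub hv); omega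
      rw [Finset.sum_congr rfl this, Finset.sum_const, smul_eq_mul, mul_comm]
    rw [Finset.sum_add_distrib, hsumdA] at h1
    omega
  -- the bad set
  set S := N \ Gh k A with hS
  have hSsub : S ⊆ N := Finset.sdiff_subset
  have hwalk_lt : ∀ v ∈ S, 8 * walkCount k A v < k ^ 3 := by
    intro v hv
    obtain ⟨hvN, hvG⟩ := Finset.mem_sdiff.mp hv
    have hvL : v ∈ Lk1 k := hNsub hvN
    have hlt : (walkCount k A v : ℝ) < (k:ℝ)^3 / (2 * (Real.log k) ^ 4) := by
      by_contra hcon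
      exact hvG (Finset.mem_filter.mpr ⟨hvL, not_lt.mp hcon⟩)
    have hk8 : (8:ℝ) ≤ (k:ℝ) := by exact_mod_cast hk
    have hkpos : (0:ℝ) < (k:ℝ) := by linarith
    have hlog : (2:ℝ) ≤ Real.log k := by
      rw [Real.le_log_iff_exp_le hkpos]
      have he : Real.exp 1 < 2.7182818286 := Real.exp_one_lt_d9
      have he2 : Real.exp 2 = Real.exp 1 * Real.exp 1 := by
        rw [← Real.exp_add]; norm_num
      nlinarith [Real.exp_pos 1]
    have hden : (8:ℝ) ≤ 2 * (Real.log k) ^ 4 := by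
      have h2 : (2:ℝ)^4 ≤ (Real.log k) ^ 4 := pow_le_pow_left₀ (by norm_num) hlog 4
      norm_num at h2
      linarith
    have hbound : (k:ℝ)^3 / (2 * (Real.log k) ^ 4) ≤ (k:ℝ)^3 / 8 :=
      div_le_div_of_nonneg_left (by positivity) (by norm_num) hden
    have h8 : (8:ℝ) * (walkCount k A v : ℝ) < (k:ℝ)^3 := by
      have := lt_of_lt_of_le hlt hbound
      linarith
    have hcast : ((8 * walkCount k A v : ℕ) : ℝ) < ((k^3 : ℕ) : ℝ) := by
      push_cast
      linarith
    exact_mod_cast hcast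
  set S1 := S.filter (fun v => 2 * dA v ≤ k) with hS1
  set S2 := S.filter (fun v => ¬ 2 * dA v ≤ k) with hS2
  have hScard : S1.card + S2.card = S.card :=
    Finset.card_filter_add_card_filter_not _
  -- bound 1
  have hB1 : k * S1.card ≤ 2 * Δ := by
    have h1 : ∀ v ∈ S1, k ≤ 2 * (k - dA v) := by
      intro v hv
      have h2 := (Finset.mem_filter.mp hv).2
      have hvL : v ∈ Lk1 k := hNsub (hSsub (Finset.mem_filter.mp hv).1)
      have := F2 v hvL; omega
    calc k * S1.card = ∑ _v ∈ S1, k := by rw [Finset.sum_const, smul_eq_mul, mul_comm]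
      _ ≤ ∑ v ∈ S1, 2 * (k - dA v) := Finset.sum_le_sum h1
      _ ≤ ∑ v ∈ N, 2 * (k - dA v) :=
          Finset.sum_le_sum_of_subset ((Finset.filter_subset _ _).trans hSsub)
      _ = 2 * Δ := by rw [hΔdef, Finset.mul_sum]
  -- bound 2
  have hWD : ∀ v, walkCount k A v + (∑ x ∈ A.filter (fun x => v ⊆ x), defx x)
      = dA v * (k * k) := by
    intro v
    rw [F3 v, ← Finset.sum_add_distrib]
    have hterm : ∀ x ∈ A.filter (fun x => v ⊆ x), (∑ y ∈ Nx x, dA y) + defx x = k * k :=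
      fun x hx => F4 x (Finset.mem_filter.mp hx).1
    rw [Finset.sum_congr rfl hterm, Finset.sum_const, smul_eq_mul]
  have hB2v : ∀ v ∈ S2, 3 * k ^ 3 ≤ 8 * ∑ x ∈ A.filter (fun x => v ⊆ x), defx x := by
    intro v hv
    have hvS : v ∈ S := (Finset.mem_filter.mp hv).1
    have hd : k < 2 * dA v := by
      have := (Finset.mem_filter.mp hv).2; omega
    have hw := hwalk_lt v hvS
    have hwd := hWD v
    have hmul : (k + 1) * (k * k) ≤ (2 * dA v) * (k * k) :=
      Nat.mul_le_mul_right _ (by omega)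
    have hk3 : k ^ 3 = k * (k * k) := by ring
    nlinarith [hmul, hw, hwd]
  have hB2 : 3 * (k ^ 3 * S2.card) ≤ 8 * (k * ∑ x ∈ A, defx x) := by
    have hS2sub : S2 ⊆ Lk1 k := (Finset.filter_subset _ _).trans (hSsub.trans hNsub)
    calc 3 * (k^3 * S2.card) = ∑ _v ∈ S2, 3 * k^3 := by
          rw [Finset.sum_const, smul_eq_mul]; ring
      _ ≤ ∑ v ∈ S2, 8 * ∑ x ∈ A.filter (fun x => v ⊆ x), defx x := Finset.sum_le_sum hB2v
      _ = 8 * ∑ v ∈ S2, ∑ x ∈ A.filter (fun x => v ⊆ x), defx x := by rw [Finset.mul_sum]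
      _ ≤ 8 * ∑ v ∈ Lk1 k, ∑ x ∈ A.filter (fun x => v ⊆ x), defx x :=
          Nat.mul_le_mul_left _ (Finset.sum_le_sum_of_subset hS2sub)
      _ = 8 * (k * ∑ x ∈ A, defx x) := by rw [swap1 defx, ← Finset.mul_sum]
  have hdef_sum : ∑ x ∈ A, defx x ≤ k * Δ := by
    have h1 : ∑ x ∈ A, defx x = ∑ y ∈ Lk1 k, dA y * (k - dA y) := swap2 _
    have h2 : ∑ y ∈ Lk1 k, dA y * (k - dA y) = ∑ y ∈ N, dA y * (k - dA y) :=
      (Finset.sum_subset hNsub (fun y hy hyN => by rw [hdA_zero y hy hyN, Nat.zero_mul])).symm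
    have h3 : ∑ y ∈ N, dA y * (k - dA y) ≤ ∑ y ∈ N, k * (k - dA y) :=
      Finset.sum_le_sum fun y hy => Nat.mul_le_mul (F2 y (hNsub hy)) le_rfl
    rw [h1, h2]
    calc ∑ y ∈ N, dA y * (k - dA y) ≤ ∑ y ∈ N, k * (k - dA y) := h3
      _ = k * Δ := by rw [hΔdef, Finset.mul_sum]
  -- combine bound 2
  have hB2' : k * S2.card ≤ 3 * Δ := by
    have h1 : 3 * (k ^ 3 * S2.card) ≤ 8 * (k * (k * Δ)) :=
      hB2.trans (Nat.mul_le_mul_left _ (Nat.mul_le_mul_left _ hdef_sum))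
    have h2 : (k * k) * (3 * (k * S2.card)) ≤ (k * k) * (8 * Δ) := by
      calc (k * k) * (3 * (k * S2.card)) = 3 * (k ^ 3 * S2.card) := by ring
        _ ≤ 8 * (k * (k * Δ)) := h1
        _ = (k * k) * (8 * Δ) := by ring
    have hkk : 0 < k * k := by positivity
    have h3 : 3 * (k * S2.card) ≤ 8 * Δ := Nat.le_of_mul_le_mul_left h2 hkk
    omega
  -- final
  have hfin : k * S.card ≤ 5 * Δ := by
    have : k * S.card = k * S1.card + k * S2.card := by rw [← hScard]; ring
    omega
  have hkR : (0:ℝ) < (k:ℝ) := by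
    have : (0:ℕ) < k := by omega
    exact_mod_cast this
  have hc1 : (k:ℝ) * S.card ≤ 5 * (Δ:ℝ) := by exact_mod_cast hfin
  have hc2 : (k:ℝ) * N.card = (k:ℝ) * A.card + (Δ:ℝ) := by exact_mod_cast hΔeq
  have h3 : (k:ℝ) * (S.card:ℝ) ≤ (k:ℝ) * (5 * ((N.card:ℝ) - (A.card:ℝ))) := by
    nlinarith
  have h4 : (S.card:ℝ) ≤ 5 * ((N.card:ℝ) - (A.card:ℝ)) :=
    le_of_mul_le_mul_left h3 hkR
  exact h4
end

section
/- Fix a constant p with 0 < p < 3/4 and let X = 𝒫(n)_p. Then with high probability there exists an isolated set, i.e., a set v ∈ [n]^(⌈n/2⌉+1) such that v ∈ X but no ⌈n/2⌉-element subset of v belongs to X; consequently, with high probability X ∩ [n]^(⌈n/2⌉) is not a maximal antichain in X. -/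
open MeasureTheory Finset Filter

/-- A set `v` of size `k` is nearly isolated with respect to `X` if `v ∈ X` and:
for `k ≥ ⌈n/2⌉` (i.e. `2k ≥ n`) at most one `(k-1)`-subset of `v` is in `X`;
for `k ≤ ⌊n/2⌋` (i.e. `2k ≤ n`) at most one `(k+1)`-superset of `v` is in `X`. -/
def NearlyIsolated (n : ℕ) (X : Finset (Finset (Fin n))) (v : Finset (Fin n)) : Prop :=
  v ∈ X ∧
    ((n ≤ 2 * v.card ∧ (X.filter (fun w => w ⊆ v ∧ w.card + 1 = v.card)).card ≤ 1) ∨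
     (2 * v.card ≤ n ∧ (X.filter (fun w => v ⊆ w ∧ w.card = v.card + 1)).card ≤ 1))

/-- `B` is a maximal antichain in `X`: an antichain in `X` not properly contained in
another antichain in `X`. -/
def IsMaximalAntichainIn (n : ℕ) (X B : Finset (Finset (Fin n))) : Prop :=
  B ⊆ X ∧ IsAntichain (· ⊆ ·) (B : Set (Finset (Fin n))) ∧
    ∀ B' : Finset (Finset (Fin n)), B ⊆ B' → B' ⊆ X →
      IsAntichain (· ⊆ ·) (B' : Set (Finset (Fin n))) → B' = B

section Aux

lemma bern_true (p : ℝ) : bern p {true} = ENNReal.ofReal p := by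
  simp [bern]

lemma bern_false (p : ℝ) : bern p {false} = ENNReal.ofReal (1 - p) := by
  simp [bern]

lemma bern_univ (p : ℝ) (h0 : 0 ≤ p) (h1 : p ≤ 1) : bern p Set.univ = 1 := by
  have : ENNReal.ofReal p + ENNReal.ofReal (1 - p) = 1 := by
    rw [← ENNReal.ofReal_add h0 (by linarith)]; norm_num
  simp [bern, this]

lemma bern_prob (p : ℝ) (h0 : 0 ≤ p) (h1 : p ≤ 1) : IsProbabilityMeasure (bern p) :=
  ⟨bern_univ p h0 h1⟩

variable {ι : Type*} [Fintype ι]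

lemma indep_split (ν : Measure Bool) [IsProbabilityMeasure ν]
    (A : Set ι) (C D : Set (ι → Bool))
    (hC : ∀ ω ω' : ι → Bool, (∀ i ∈ A, ω i = ω' i) → (ω ∈ C ↔ ω' ∈ C))
    (hD : ∀ ω ω' : ι → Bool, (∀ i ∉ A, ω i = ω' i) → (ω ∈ D ↔ ω' ∈ D)) :
    Measure.pi (fun _ : ι => ν) (C ∩ D)
      = Measure.pi (fun _ : ι => ν) C * Measure.pi (fun _ : ι => ν) D := by
  classical
  set e := MeasurableEquiv.piEquivPiSubtypeProd (fun _ : ι => Bool) (· ∈ A) with he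
  have hmp := measurePreserving_piEquivPiSubtypeProd (fun _ : ι => ν) (· ∈ A)
  set ext : ({ i // i ∈ A } → Bool) → ({ i // ¬ i ∈ A } → Bool) → (ι → Bool) :=
    fun a b i => if h : i ∈ A then a ⟨i, h⟩ else b ⟨i, h⟩ with hext
  set C₁ : Set ({ i // i ∈ A } → Bool) := {a | ext a (fun _ => false) ∈ C} with hC₁
  set D₁ : Set ({ i // ¬ i ∈ A } → Bool) := {b | ext (fun _ => false) b ∈ D} with hD₁
  have hCmem : ∀ ω : ι → Bool, ω ∈ C ↔ (e ω).1 ∈ C₁ := by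
    intro ω
    have : ∀ i ∈ A, ω i = ext (e ω).1 (fun _ => false) i := by
      intro i hi
      simp [hext, he, MeasurableEquiv.piEquivPiSubtypeProd, Equiv.piEquivPiSubtypeProd, hi]
    exact hC _ _ this
  have hDmem : ∀ ω : ι → Bool, ω ∈ D ↔ (e ω).2 ∈ D₁ := by
    intro ω
    have : ∀ i ∉ A, ω i = ext (fun _ => false) (e ω).2 i := by
      intro i hi
      simp [hext, he, MeasurableEquiv.piEquivPiSubtypeProd, Equiv.piEquivPiSubtypeProd, hi]
    exact hD _ _ this
  have key : ∀ S : Set (ι → Bool), ∀ T : Set (({ i // i ∈ A } → Bool) × ({ i // ¬ i ∈ A } → Bool)),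
      S = e ⁻¹' T → Measure.pi (fun _ : ι => ν) S
        = ((Measure.pi fun _ : { i // i ∈ A } => ν).prod (Measure.pi fun _ : { i // ¬ i ∈ A } => ν)) T := by
    intro S T hST
    rw [hST, ← hmp.map_eq, Measure.map_apply hmp.measurable .of_discrete]
  have h1 : Measure.pi (fun _ : ι => ν) (C ∩ D)
      = ((Measure.pi fun _ : { i // i ∈ A } => ν).prod (Measure.pi fun _ : { i // ¬ i ∈ A } => ν)) (C₁ ×ˢ D₁) := by
    apply key; ext ω; simp [hCmem ω, hDmem ω, Set.mem_prod]
  have h2 : Measure.pi (fun _ : ι => ν) C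
      = ((Measure.pi fun _ : { i // i ∈ A } => ν).prod (Measure.pi fun _ : { i // ¬ i ∈ A } => ν)) (C₁ ×ˢ Set.univ) := by
    apply key; ext ω; simp [hCmem ω, Set.mem_prod]
  have h3 : Measure.pi (fun _ : ι => ν) D
      = ((Measure.pi fun _ : { i // i ∈ A } => ν).prod (Measure.pi fun _ : { i // ¬ i ∈ A } => ν)) (Set.univ ×ˢ D₁) := by
    apply key; ext ω; simp [hDmem ω, Set.mem_prod]
  rw [h1, h2, h3, Measure.prod_prod, Measure.prod_prod, Measure.prod_prod]
  simp [mul_comm, mul_assoc, mul_left_comm]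
lemma cylinder_measure (ν : Measure Bool) [IsProbabilityMeasure ν]
    (B : Finset ι) (t : ι → Bool) :
    Measure.pi (fun _ : ι => ν) {ω | ∀ i ∈ B, ω i = t i} = ∏ i ∈ B, ν {t i} := by
  classical
  have hset : {ω : ι → Bool | ∀ i ∈ B, ω i = t i}
      = Set.pi Set.univ (fun i => if i ∈ B then {t i} else Set.univ) := by
    ext ω
    simp only [Set.mem_pi, Set.mem_univ, forall_true_left, Set.mem_setOf_eq]
    constructor
    · intro h i
      by_cases hi : i ∈ B
      · simp [hi, h i hi]
      · simp [hi]
    · intro h i hi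
      have := h i
      simpa [hi] using this
  rw [hset, Measure.pi_pi]
  rw [← Finset.prod_filter_mul_prod_filter_not Finset.univ (· ∈ B)]
  have h1 : ∀ i ∈ Finset.univ.filter (· ∈ B), ν (if i ∈ B then {t i} else Set.univ) = ν {t i} := by
    intro i hi; simp at hi; simp [hi]
  have h2 : ∀ i ∈ Finset.univ.filter (¬ · ∈ B), ν (if i ∈ B then {t i} else Set.univ) = 1 := by
    intro i hi; simp at hi; rw [if_neg hi]; exact measure_univ
  rw [Finset.prod_congr rfl h1, Finset.prod_congr rfl h2, Finset.prod_const_one, mul_one]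
  congr 1
  ext i; simp

lemma agree_iff {ι : Type*} (B : Finset ι) (t : ι → Bool) (ω ω' : ι → Bool)
    (hagree : ∀ i ∈ B, ω i = ω' i) :
    (∀ i ∈ B, ω i = t i) ↔ (∀ i ∈ B, ω' i = t i) := by
  constructor <;> intro h i hi
  · rw [← hagree i hi]; exact h i hi
  · rw [hagree i hi]; exact h i hi

lemma family_product {ι : Type*} [Fintype ι] {κ : Type*} (ν : Measure Bool) [IsProbabilityMeasure ν]
    (F : Finset κ) (B : κ → Finset ι) (t : κ → ι → Bool)
    (hdisj : ∀ v ∈ F, ∀ v' ∈ F, v ≠ v' → Disjoint (B v) (B v')) :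
    Measure.pi (fun _ : ι => ν) {ω | ∀ v ∈ F, ¬ (∀ i ∈ B v, ω i = t v i)}
      = ∏ v ∈ F, (1 - ∏ i ∈ B v, ν {t v i}) := by
  classical
  haveI : IsProbabilityMeasure (Measure.pi fun _ : ι => ν) := by infer_instance
  induction F using Finset.cons_induction with
  | empty => simp
  | cons a s ha ih =>
    have hsplit : {ω : ι → Bool | ∀ v ∈ Finset.cons a s ha, ¬ (∀ i ∈ B v, ω i = t v i)}
        = {ω | ¬ (∀ i ∈ B a, ω i = t a i)} ∩ {ω | ∀ v ∈ s, ¬ (∀ i ∈ B v, ω i = t v i)} := by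
      ext ω; simp [Finset.forall_mem_cons]
    rw [hsplit]
    rw [indep_split ν (↑(B a) : Set ι) _ _ ?_ ?_]
    · rw [Finset.prod_cons]
      congr 1
      · have hcompl : {ω : ι → Bool | ¬ (∀ i ∈ B a, ω i = t a i)}
            = {ω : ι → Bool | ∀ i ∈ B a, ω i = t a i}ᶜ := by ext ω; simp
        rw [hcompl, measure_compl .of_discrete (measure_ne_top _ _),
          cylinder_measure ν (B a) (t a), measure_univ]
      · exact ih (fun v hv v' hv' hne => hdisj v (Finset.mem_cons_of_mem hv) v'
          (Finset.mem_cons_of_mem hv') hne)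
    · intro ω ω' hagree
      simp only [Set.mem_setOf_eq]
      exact not_congr (agree_iff (B a) (t a) ω ω' (fun i hi => hagree i (by exact_mod_cast hi)))
    · intro ω ω' hagree
      simp only [Set.mem_setOf_eq]
      apply forall₂_congr
      intro v hv
      apply not_congr
      apply agree_iff
      intro i hi
      apply hagree
      intro hmem
      have hav : a ≠ v := fun h => ha (h ▸ hv)
      have := hdisj a (Finset.mem_cons_self a s) v (Finset.mem_cons_of_mem hv) hav
      exact (Finset.disjoint_left.mp this (by exact_mod_cast hmem)) hi

def codeF (n : ℕ) (r : ZMod n) : Finset (Finset (Fin n)) :=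
  (Finset.univ.powersetCard ((n+1)/2 + 1)).filter (fun v => ∑ i ∈ v, ((i : ℕ) : ZMod n) = r)

lemma codeF_card (n : ℕ) (r : ZMod n) (v : Finset (Fin n)) (hv : v ∈ codeF n r) :
    v.card = (n+1)/2 + 1 := by
  have := (Finset.mem_filter.mp hv).1
  exact (Finset.mem_powersetCard.mp this).2

lemma codeF_no_common (n : ℕ) (r : ZMod n) (v v' : Finset (Fin n))
    (hv : v ∈ codeF n r) (hv' : v' ∈ codeF n r) (hne : v ≠ v')
    (w : Finset (Fin n)) (hw : w ⊆ v) (hw' : w ⊆ v')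
    (hcard : w.card = (n+1)/2) : False := by
  classical
  have hvc := codeF_card n r v hv
  have hv'c := codeF_card n r v' hv'
  have h1 : (v \ w).card = 1 := by
    rw [Finset.card_sdiff_of_subset hw]; omega
  have h2 : (v' \ w).card = 1 := by
    rw [Finset.card_sdiff_of_subset hw']; omega
  obtain ⟨a, ha⟩ := Finset.card_eq_one.mp h1
  obtain ⟨b, hb⟩ := Finset.card_eq_one.mp h2
  have hva : v = insert a w := by
    rw [← Finset.sdiff_union_of_subset hw, ha]; ext x; simp [or_comm]
  have hv'b : v' = insert b w := by
    rw [← Finset.sdiff_union_of_subset hw', hb]; ext x; simp [or_comm]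
  have hanw : a ∉ w := by
    have : a ∈ v \ w := ha ▸ Finset.mem_singleton_self a
    exact (Finset.mem_sdiff.mp this).2
  have hbnw : b ∉ w := by
    have : b ∈ v' \ w := hb ▸ Finset.mem_singleton_self b
    exact (Finset.mem_sdiff.mp this).2
  have hab : a ≠ b := by
    intro h; exact hne (by rw [hva, hv'b, h])
  have hs1 : ∑ i ∈ v, ((i : ℕ) : ZMod n) = r := (Finset.mem_filter.mp hv).2
  have hs2 : ∑ i ∈ v', ((i : ℕ) : ZMod n) = r := (Finset.mem_filter.mp hv').2
  rw [hva, Finset.sum_insert hanw] at hs1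
  rw [hv'b, Finset.sum_insert hbnw] at hs2
  have : ((a : ℕ) : ZMod n) = ((b : ℕ) : ZMod n) := by
    have := hs1.trans hs2.symm
    exact add_right_cancel this
  apply hab
  have ha' := ZMod.val_cast_of_lt a.isLt
  have hb' := ZMod.val_cast_of_lt b.isLt
  have : (a : ℕ) = (b : ℕ) := by rw [← ha', ← hb', this]
  exact Fin.ext this

lemma codeF_size (n : ℕ) (hn : 1 ≤ n) :
    ∃ r : ZMod n, Nat.choose n ((n+1)/2 + 1) ≤ n * (codeF n r).card := by
  classical
  haveI : NeZero n := ⟨by omega⟩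
  obtain ⟨r, -, hr⟩ := Finset.exists_max_image (Finset.univ : Finset (ZMod n))
    (fun r => (codeF n r).card) ⟨0, Finset.mem_univ 0⟩
  refine ⟨r, ?_⟩
  have hpart : (Finset.univ.powersetCard ((n+1)/2 + 1) : Finset (Finset (Fin n))).card
      = ∑ s : ZMod n, (codeF n s).card := by
    exact Finset.card_eq_sum_card_fiberwise (fun v _ => Finset.mem_univ _)
  have hsum : ∑ s : ZMod n, (codeF n s).card ≤ n * (codeF n r).card := by
    calc ∑ s : ZMod n, (codeF n s).card ≤ ∑ _s : ZMod n, (codeF n r).card :=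
          Finset.sum_le_sum (fun s _ => hr s (Finset.mem_univ s))
      _ = n * (codeF n r).card := by rw [Finset.sum_const, Finset.card_univ, ZMod.card n, smul_eq_mul]
  calc Nat.choose n ((n+1)/2 + 1) = (Finset.univ.powersetCard ((n+1)/2 + 1) : Finset (Finset (Fin n))).card := by
        rw [Finset.card_powersetCard, Finset.card_univ, Fintype.card_fin]
    _ ≤ n * (codeF n r).card := hpart ▸ hsum

lemma choose_central (n : ℕ) : 2 ^ n ≤ (n + 1) * Nat.choose n ((n+1)/2) := by
  have hsym : Nat.choose n ((n+1)/2) = Nat.choose n (n/2) := by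
    have h1 : n - n/2 = (n+1)/2 := by omega
    rw [← h1, Nat.choose_symm (Nat.div_le_self n 2)]
  rw [hsym]
  calc 2 ^ n = ∑ i ∈ Finset.range (n + 1), Nat.choose n i := (Nat.sum_range_choose n).symm
    _ ≤ ∑ _i ∈ Finset.range (n + 1), Nat.choose n (n / 2) :=
        Finset.sum_le_sum (fun i _ => Nat.choose_le_middle i n)
    _ = (n + 1) * Nat.choose n (n / 2) := by rw [Finset.sum_const, Finset.card_range, smul_eq_mul]

lemma choose_bound (n : ℕ) (hn : 3 ≤ n) :
    2 ^ n ≤ 4 * (n + 1) * Nat.choose n ((n+1)/2 + 1) := by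
  set k := (n+1)/2 with hk
  have h3 : Nat.choose n (k+1) * (k+1) = Nat.choose n k * (n - k) :=
    Nat.choose_succ_right_eq n k
  have h4 : Nat.choose n k ≤ 4 * Nat.choose n (k+1) := by
    have hineq : k + 1 ≤ 4 * (n - k) := by omega
    have : Nat.choose n k * (k+1) ≤ 4 * Nat.choose n (k+1) * (k+1) := by
      calc Nat.choose n k * (k+1) ≤ Nat.choose n k * (4 * (n - k)) :=
            Nat.mul_le_mul_left _ hineq
        _ = 4 * (Nat.choose n k * (n - k)) := by ring
        _ = 4 * (Nat.choose n (k+1) * (k+1)) := by rw [h3]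
        _ = 4 * Nat.choose n (k+1) * (k+1) := by ring
    exact Nat.le_of_mul_le_mul_right this (by omega)
  calc 2 ^ n ≤ (n + 1) * Nat.choose n k := choose_central n
    _ ≤ (n + 1) * (4 * Nat.choose n (k+1)) := Nat.mul_le_mul_left _ h4
    _ = 4 * (n + 1) * Nat.choose n (k+1) := by ring

lemma isolated_not_max (n : ℕ) (X : Finset (Finset (Fin n))) (v : Finset (Fin n))
    (hcard : v.card = (n + 1) / 2 + 1) (hvX : v ∈ X)
    (hiso : ∀ w ⊆ v, w.card = (n + 1) / 2 → w ∉ X) :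
    ¬ IsMaximalAntichainIn n X (X.filter (fun s => s.card = (n + 1) / 2)) := by
  classical
  rintro ⟨hBX, hanti, hmax⟩
  set B := X.filter (fun s => s.card = (n + 1) / 2) with hB
  have hvB : v ∉ B := by
    intro h
    have := (Finset.mem_filter.mp h).2
    omega
  have hanti' : IsAntichain (· ⊆ ·) ((insert v B : Finset (Finset (Fin n))) : Set (Finset (Fin n))) := by
    intro a ha b hb hab hsub
    simp only [Finset.coe_insert, Set.mem_insert_iff, Finset.mem_coe] at ha hb
    rcases ha with rfl | haB
    · rcases hb with rfl | hbB
      · exact hab rfl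
      · have hbcard := (Finset.mem_filter.mp hbB).2
        have := Finset.card_le_card hsub
        omega
    · rcases hb with rfl | hbB
      · have hacard := (Finset.mem_filter.mp haB).2
        exact hiso a hsub hacard (Finset.mem_filter.mp haB).1
      · exact hanti haB hbB hab hsub
  have heq := hmax (insert v B) (Finset.subset_insert v B)
    (Finset.insert_subset hvX hBX) hanti'
  exact hvB (heq ▸ Finset.mem_insert_self v B)

lemma per_n (p : ℝ) (hp0 : 0 < p) (hp1 : p < 1) (n : ℕ) (hn : 3 ≤ n) :
    ∃ m : ℕ, Nat.choose n ((n+1)/2 + 1) ≤ n * m ∧ 1 ≤ m ∧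
      (pSpace (Finset (Fin n)) p)
        {ω | ∃ v : Finset (Fin n), v.card = (n + 1) / 2 + 1 ∧ v ∈ sample ω ∧
              ∀ w ⊆ v, w.card = (n + 1) / 2 → w ∉ sample ω}ᶜ
        ≤ ENNReal.ofReal ((1 - p * (1 - p) ^ ((n+1)/2 + 1)) ^ m) := by
  classical
  haveI := bern_prob p hp0.le hp1.le
  set k := (n+1)/2 with hk
  obtain ⟨r, hr⟩ := codeF_size n (by omega)
  set F := codeF n r with hF
  refine ⟨F.card, hr, ?_, ?_⟩
  · by_contra h
    have hF0 : F.card = 0 := by omega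
    rw [hF0, Nat.mul_zero] at hr
    have : 0 < Nat.choose n ((n+1)/2 + 1) := Nat.choose_pos (by omega)
    omega
  set B : Finset (Fin n) → Finset (Finset (Fin n)) :=
    fun v => insert v (Finset.powersetCard k v) with hB
  set t : Finset (Fin n) → Finset (Fin n) → Bool := fun v w => decide (w = v) with ht
  have hvB : ∀ v : Finset (Fin n), v.card = k + 1 → v ∉ Finset.powersetCard k v := by
    intro v hv hmem
    have := (Finset.mem_powersetCard.mp hmem).2
    omega
  have hdisj : ∀ v ∈ F, ∀ v' ∈ F, v ≠ v' → Disjoint (B v) (B v') := by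
    intro v hv v' hv' hne
    rw [Finset.disjoint_left]
    intro u hu hu'
    have hvc := codeF_card n r v hv
    have hv'c := codeF_card n r v' hv'
    rw [hB] at hu hu'
    simp only [Finset.mem_insert] at hu hu'
    rcases hu with rfl | hu
    · rcases hu' with rfl | hu'
      · exact hne rfl
      · have := (Finset.mem_powersetCard.mp hu').2; omega
    · rcases hu' with rfl | hu'
      · have := (Finset.mem_powersetCard.mp hu).2; omega
      · obtain ⟨hsub, hcard⟩ := Finset.mem_powersetCard.mp hu
        obtain ⟨hsub', -⟩ := Finset.mem_powersetCard.mp hu'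
        exact codeF_no_common n r v v' hv hv' hne u hsub hsub' hcard
  have hsubset : {ω : Finset (Fin n) → Bool | ∃ v : Finset (Fin n),
        v.card = k + 1 ∧ v ∈ sample ω ∧ ∀ w ⊆ v, w.card = k → w ∉ sample ω}ᶜ
      ⊆ {ω | ∀ v ∈ F, ¬ (∀ i ∈ B v, ω i = t v i)} := by
    intro ω hω v hv hcyl
    apply hω
    have hvc := codeF_card n r v hv
    refine ⟨v, hvc, ?_, ?_⟩
    · have : ω v = t v v := hcyl v (Finset.mem_insert_self v _)
      simp only [ht, decide_eq_true_eq] at this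
      simp [sample, this]
    · intro w hw hwcard hws
      have hwB : w ∈ B v := Finset.mem_insert_of_mem
        (Finset.mem_powersetCard.mpr ⟨hw, hwcard⟩)
      have hwv : w ≠ v := by intro h; rw [h] at hwcard; omega
      have : ω w = t v w := hcyl w hwB
      rw [ht] at this
      simp only [sample, Finset.mem_filter] at hws
      rw [hws.2] at this
      simp [hwv] at this
  have hmeas := family_product (bern p) F B t hdisj
  have hprod : ∀ v ∈ F, (1 - ∏ i ∈ B v, bern p {t v i})
      = ENNReal.ofReal (1 - p * (1 - p) ^ (k + 1)) := by
    intro v hv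
    have hvc := codeF_card n r v hv
    have hnotmem := hvB v hvc
    rw [hB]
    rw [Finset.prod_insert hnotmem]
    have h1 : bern p {t v v} = ENNReal.ofReal p := by
      have htv : t v v = true := by simp [ht]
      rw [htv]; exact bern_true p
    have h2 : ∀ w ∈ Finset.powersetCard k v, bern p {t v w} = ENNReal.ofReal (1 - p) := by
      intro w hw
      have hwc := (Finset.mem_powersetCard.mp hw).2
      have hwv : w ≠ v := by intro h; rw [h] at hwc; omega
      have htw : t v w = false := by simp [ht, hwv]
      rw [htw]; exact bern_false p
    rw [h1, Finset.prod_congr rfl h2, Finset.prod_const]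
    have hcardp : (Finset.powersetCard k v).card = k + 1 := by
      rw [Finset.card_powersetCard, hvc, Nat.choose_succ_self_right]
    rw [hcardp]
    have hq0 : 0 ≤ p * (1 - p) ^ (k + 1) :=
      mul_nonneg hp0.le (pow_nonneg (by linarith) _)
    have hq1 : p * (1 - p) ^ (k + 1) ≤ 1 := by
      calc p * (1 - p) ^ (k + 1) ≤ p * 1 := by
            apply mul_le_mul_of_nonneg_left _ hp0.le
            exact pow_le_one₀ (by linarith) (by linarith)
        _ ≤ 1 := by linarith
    rw [ENNReal.ofReal_sub 1 hq0, ENNReal.ofReal_one, ENNReal.ofReal_mul hp0.le,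
      ENNReal.ofReal_pow (by linarith : (0:ℝ) ≤ 1 - p)]
  calc (pSpace (Finset (Fin n)) p) {ω | ∃ v : Finset (Fin n), v.card = k + 1 ∧ v ∈ sample ω ∧
          ∀ w ⊆ v, w.card = k → w ∉ sample ω}ᶜ
      ≤ (pSpace (Finset (Fin n)) p) {ω | ∀ v ∈ F, ¬ (∀ i ∈ B v, ω i = t v i)} :=
        measure_mono hsubset
    _ = ∏ v ∈ F, (1 - ∏ i ∈ B v, bern p {t v i}) := hmeas
    _ = ENNReal.ofReal ((1 - p * (1 - p) ^ (k + 1)) ^ F.card) := by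
        rw [Finset.prod_congr rfl hprod, Finset.prod_const,
          ← ENNReal.ofReal_pow]
        have : p * (1 - p) ^ (k + 1) ≤ 1 := by
          calc p * (1 - p) ^ (k + 1) ≤ p * 1 := by
                apply mul_le_mul_of_nonneg_left _ hp0.le
                exact pow_le_one₀ (by linarith) (by linarith)
            _ ≤ 1 := by linarith
        linarith

lemma pow_bound (x : ℝ) (hx0 : 0 < x) (hx1 : x ≤ 1) (m : ℕ) (hm : 1 ≤ m) :
    (1 - x) ^ m ≤ 1 / (m * x) := by
  have h1 : (1 - x : ℝ) ≤ Real.exp (-x) := by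
    have := Real.add_one_le_exp (-x); linarith
  have h2 : (1 - x : ℝ) ^ m ≤ Real.exp (-x) ^ m :=
    pow_le_pow_left₀ (by linarith) h1 m
  have h3 : Real.exp (-x) ^ m = Real.exp (-(m * x)) := by
    rw [← Real.exp_nat_mul]; ring_nf
  have h4 : (m : ℝ) * x ≤ Real.exp (m * x) := by
    have := Real.add_one_le_exp ((m : ℝ) * x); linarith
  have hmx : (0 : ℝ) < m * x := by
    apply mul_pos _ hx0
    exact_mod_cast Nat.lt_of_lt_of_le Nat.zero_lt_one hm
  calc (1 - x) ^ m ≤ Real.exp (-(m * x)) := h3 ▸ h2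
    _ = (Real.exp (m * x))⁻¹ := Real.exp_neg _
    _ ≤ ((m : ℝ) * x)⁻¹ := by
        apply inv_anti₀ hmx h4
    _ = 1 / (m * x) := (one_div _).symm

lemma div_tendsto : Tendsto (fun n : ℕ => n / 2) atTop atTop := by
  apply tendsto_atTop_atTop.mpr
  intro b
  exact ⟨2 * b, fun a ha => by omega⟩

lemma geom_poly_tendsto (K rr : ℝ) (h0 : 0 < rr) (h1 : rr < 1) :
    Tendsto (fun j : ℕ => K * (2 * j + 2 : ℝ) ^ 2 * rr ^ j) atTop (nhds 0) := by
  have hnorm : ‖rr‖ < 1 := by rw [Real.norm_eq_abs, abs_of_pos h0]; exact h1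
  have t2 : Tendsto (fun j : ℕ => (j : ℝ) ^ 2 * rr ^ j) atTop (nhds 0) :=
    (summable_pow_mul_geometric_of_norm_lt_one 2 hnorm).tendsto_atTop_zero
  have t1 : Tendsto (fun j : ℕ => (j : ℝ) ^ 1 * rr ^ j) atTop (nhds 0) :=
    (summable_pow_mul_geometric_of_norm_lt_one 1 hnorm).tendsto_atTop_zero
  have t0 : Tendsto (fun j : ℕ => (j : ℝ) ^ 0 * rr ^ j) atTop (nhds 0) :=
    (summable_pow_mul_geometric_of_norm_lt_one 0 hnorm).tendsto_atTop_zero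
  have comb : Tendsto (fun j : ℕ =>
      K * 4 * ((j : ℝ) ^ 2 * rr ^ j) + K * 8 * ((j : ℝ) ^ 1 * rr ^ j)
        + K * 4 * ((j : ℝ) ^ 0 * rr ^ j)) atTop (nhds 0) := by
    have := ((t2.const_mul (K * 4)).add (t1.const_mul (K * 8))).add (t0.const_mul (K * 4))
    simpa using this
  convert comb using 2 with j
  ring

lemma final_real (p : ℝ) (hp0 : 0 < p) (hp : p < 3/4) (n m C : ℕ) (hn : 3 ≤ n)
    (hmC : C ≤ n * m) (hC2 : 2 ^ n ≤ 4 * (n + 1) * C) (hm : 1 ≤ m) :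
    (1 - p * (1 - p) ^ ((n+1)/2 + 1)) ^ m
      ≤ (4 / (p * (1 - p) ^ 2)) * (2 * ((n/2 : ℕ) : ℝ) + 2) ^ 2 * (1 / (4 * (1 - p))) ^ (n/2) := by
  set a : ℝ := 1 - p with ha
  have hp1 : p < 1 := by linarith
  have ha0 : 0 < a := by simp [ha]; linarith
  have ha1 : a < 1 := by simp [ha]; linarith
  have h4a : 1 < 4 * a := by simp [ha]; linarith
  set k : ℕ := (n+1)/2 with hk
  set j : ℕ := n/2 with hj
  set q : ℝ := p * a ^ (k + 1) with hq
  have hq0 : 0 < q := by positivity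
  have hq1 : q ≤ 1 := by
    have : a ^ (k+1) ≤ 1 := pow_le_one₀ ha0.le (by linarith)
    calc q ≤ p * 1 := by apply mul_le_mul_of_nonneg_left this hp0.le
      _ ≤ 1 := by linarith
  have hm0' : (0:ℝ) < (m:ℝ) := by
    have : 0 < m := by omega
    exact_mod_cast this
  have hmq : (0:ℝ) < (m : ℝ) * q := mul_pos hm0' hq0

  have step1 : (1 - q) ^ m ≤ 1 / ((m : ℝ) * q) := pow_bound q hq0 hq1 m hm
  have hmain : (2:ℝ) ^ n ≤ 4 * ((n:ℝ) + 1) * n * m := by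
    have : (2:ℝ)^n ≤ 4 * ((n:ℝ)+1) * C := by exact_mod_cast hC2
    have hCnm : (C:ℝ) ≤ (n:ℝ) * m := by exact_mod_cast hmC
    have hnpos : (0:ℝ) < (n:ℝ) := by
      have : 0 < n := by omega
      exact_mod_cast this
    nlinarith [hnpos, hCnm]
  have hk2 : k + 1 ≤ j + 2 := by omega
  have hn2j : 2 * j ≤ n := by omega
  have hnj : (n:ℝ) + 1 ≤ 2 * (j:ℝ) + 2 := by exact_mod_cast (show n + 1 ≤ 2*j+2 by omega)
  have hnj' : (n:ℝ) ≤ 2 * (j:ℝ) + 2 := by linarith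
  have hG : a^2 * (4*a)^j ≤ 4 * (2*(j:ℝ)+2)^2 * m * a^(k+1) := by
    have hm1 : (1:ℝ) ≤ (m:ℝ) := by exact_mod_cast hm
    calc a^2 * (4*a)^j = 4^j * a^(j+2) := by rw [mul_pow, pow_add]; ring
      _ ≤ 4^j * a^(k+1) := by
          apply mul_le_mul_of_nonneg_left (pow_le_pow_of_le_one ha0.le ha1.le hk2)
          positivity
      _ ≤ (2:ℝ)^n * a^(k+1) := by
          apply mul_le_mul_of_nonneg_right _ (by positivity)
          calc (4:ℝ)^j = 2^(2*j) := by rw [pow_mul]; norm_num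
            _ ≤ 2^n := pow_le_pow_right₀ one_le_two hn2j
      _ ≤ (4 * ((n:ℝ)+1) * n * m) * a^(k+1) :=
          mul_le_mul_of_nonneg_right hmain (by positivity)
      _ ≤ 4 * (2*(j:ℝ)+2)^2 * m * a^(k+1) := by
          apply mul_le_mul_of_nonneg_right _ (by positivity)
          have hn0 : (0:ℝ) ≤ (n:ℝ) := by positivity
          have hkey : ((n:ℝ)+1) * n ≤ (2*(j:ℝ)+2) * (2*(j:ℝ)+2) :=
            mul_le_mul hnj hnj' hn0 (by linarith)
          nlinarith [hm0'.le, hkey]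
  have hdenom : (0:ℝ) < a^2 * (4*a)^j := by positivity
  have hR : (4 / (p * a ^ 2)) * (2 * (j:ℝ) + 2) ^ 2 * (1 / (4 * a)) ^ j * ((m:ℝ) * q)
      = (4 * (2*(j:ℝ)+2)^2 * m * a^(k+1)) / (a^2 * (4*a)^j) := by
    rw [hq]
    field_simp
    ring
    rw [← mul_pow, ← mul_pow, ← mul_pow, mul_inv_cancel₀ ha0.ne']; norm_num
  calc (1 - q) ^ m ≤ 1 / ((m : ℝ) * q) := step1
    _ ≤ (4 / (p * a ^ 2)) * (2 * (j:ℝ) + 2) ^ 2 * (1 / (4 * a)) ^ j := by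
        rw [div_le_iff₀ hmq, hR]
        exact (one_le_div hdenom).mpr hG

end Aux

/-- For constant `0 < p < 3/4`, with high probability there is an isolated
set `v ∈ [n]^(⌈n/2⌉+1)` (i.e. `v ∈ X` but no `⌈n/2⌉`-subset of `v` is in `X`), and
consequently `X ∩ [n]^(⌈n/2⌉)` is not a maximal antichain in `X = 𝒫(n)_p`. -/
theorem statement_19 (p : ℝ) (hp0 : 0 < p) (hp : p < 3 / 4) :
    Filter.Tendsto (fun n : ℕ =>
      ((pSpace (Finset (Fin n)) p)
        {ω | (∃ v : Finset (Fin n), v.card = (n + 1) / 2 + 1 ∧ v ∈ sample ω ∧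
                ∀ w ⊆ v, w.card = (n + 1) / 2 → w ∉ sample ω) ∧
          ¬ IsMaximalAntichainIn n (sample ω)
              ((sample ω).filter (fun s => s.card = (n + 1) / 2))}).toReal)
      Filter.atTop (nhds 1) := by
  classical
  have hp1 : p < 1 := by linarith
  haveI := bern_prob p hp0.le hp1.le
  have hfun : (fun n : ℕ =>
      ((pSpace (Finset (Fin n)) p)
        {ω | (∃ v : Finset (Fin n), v.card = (n + 1) / 2 + 1 ∧ v ∈ sample ω ∧
                ∀ w ⊆ v, w.card = (n + 1) / 2 → w ∉ sample ω) ∧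
          ¬ IsMaximalAntichainIn n (sample ω)
              ((sample ω).filter (fun s => s.card = (n + 1) / 2))}).toReal)
      = fun n : ℕ =>
      ((pSpace (Finset (Fin n)) p)
        {ω | ∃ v : Finset (Fin n), v.card = (n + 1) / 2 + 1 ∧ v ∈ sample ω ∧
                ∀ w ⊆ v, w.card = (n + 1) / 2 → w ∉ sample ω}).toReal := by
    funext n
    congr 1
    congr 1
    ext ω
    simp only [Set.mem_setOf_eq]
    constructor
    · exact And.left
    · intro hA
      refine ⟨hA, ?_⟩
      obtain ⟨v, h1, h2, h3⟩ := hA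
      exact isolated_not_max n (sample ω) v h1 h2 h3
  rw [hfun]
  set rr : ℝ := 1 / (4 * (1 - p)) with hrr
  have hrr0 : 0 < rr := by
    have h1p : (0:ℝ) < 1 - p := by linarith
    rw [hrr]; positivity
  have hrr1 : rr < 1 := by
    rw [hrr]
    rw [div_lt_one (by linarith)]
    linarith
  set b : ℕ → ℝ := fun n =>
    (4 / (p * (1 - p) ^ 2)) * (2 * ((n / 2 : ℕ) : ℝ) + 2) ^ 2 * rr ^ (n / 2) with hb
  have hbtend : Tendsto b atTop (nhds 0) := by
    have h1 := geom_poly_tendsto (4 / (p * (1 - p) ^ 2)) rr hrr0 hrr1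
    have h2 := h1.comp div_tendsto
    exact h2
  have hup : ∀ᶠ n in atTop, ((pSpace (Finset (Fin n)) p)
      {ω | ∃ v : Finset (Fin n), v.card = (n + 1) / 2 + 1 ∧ v ∈ sample ω ∧
            ∀ w ⊆ v, w.card = (n + 1) / 2 → w ∉ sample ω}).toReal ≤ 1 := by
    apply Filter.Eventually.of_forall
    intro n
    haveI : IsProbabilityMeasure (pSpace (Finset (Fin n)) p) := by
      unfold pSpace; infer_instance
    set S : Set (Finset (Fin n) → Bool) := {ω | ∃ v : Finset (Fin n),
      v.card = (n + 1) / 2 + 1 ∧ v ∈ sample ω ∧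
      ∀ w ⊆ v, w.card = (n + 1) / 2 → w ∉ sample ω} with hS
    have h := prob_le_one (μ := pSpace (Finset (Fin n)) p) (s := S)
    have h2 : ((pSpace (Finset (Fin n)) p) S).toReal ≤ (1 : ENNReal).toReal :=
      ENNReal.toReal_mono (by norm_num) h
    simpa using h2
  have hlow : ∀ᶠ n in atTop, 1 - b n ≤ ((pSpace (Finset (Fin n)) p)
      {ω | ∃ v : Finset (Fin n), v.card = (n + 1) / 2 + 1 ∧ v ∈ sample ω ∧
            ∀ w ⊆ v, w.card = (n + 1) / 2 → w ∉ sample ω}).toReal := by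
    rw [eventually_atTop]
    refine ⟨3, fun n hn => ?_⟩
    haveI : IsProbabilityMeasure (pSpace (Finset (Fin n)) p) := by
      unfold pSpace; infer_instance
    obtain ⟨m, hmC, hm1, hbound⟩ := per_n p hp0 hp1 n hn
    set μ := pSpace (Finset (Fin n)) p with hμ
    set S : Set (Finset (Fin n) → Bool) := {ω | ∃ v : Finset (Fin n),
      v.card = (n + 1) / 2 + 1 ∧ v ∈ sample ω ∧
      ∀ w ⊆ v, w.card = (n + 1) / 2 → w ∉ sample ω} with hS
    have hq1 : p * (1 - p) ^ ((n + 1) / 2 + 1) ≤ 1 := by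
      have h1 : (1 - p) ^ ((n + 1) / 2 + 1) ≤ 1 := pow_le_one₀ (by linarith) (by linarith)
      calc p * (1 - p) ^ ((n + 1) / 2 + 1) ≤ p * 1 :=
            mul_le_mul_of_nonneg_left h1 hp0.le
        _ ≤ 1 := by linarith
    have h1 : (μ Sᶜ).toReal ≤ (1 - p * (1 - p) ^ ((n + 1) / 2 + 1)) ^ m :=
      ENNReal.toReal_le_of_le_ofReal (pow_nonneg (by linarith) m) hbound
    have h2 := final_real p hp0 hp n m (Nat.choose n ((n + 1) / 2 + 1)) hn hmC
      (choose_bound n hn) hm1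
    have hadd : (μ S).toReal + (μ Sᶜ).toReal = 1 := by
      rw [← ENNReal.toReal_add (measure_ne_top _ _) (measure_ne_top _ _),
        measure_add_measure_compl .of_discrete]
      simp
    have h3 : (μ Sᶜ).toReal ≤ b n := h1.trans h2
    linarith
  have hg : Tendsto (fun n : ℕ => 1 - b n) atTop (nhds 1) := by
    have := (tendsto_const_nhds (x := (1:ℝ)) (f := atTop)).sub hbtend
    simpa using this
  exact tendsto_of_tendsto_of_tendsto_of_le_of_le' hg tendsto_const_nhds hlow hup
end
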